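/- arXiv:1506.02944 — 12 statements merged into one kernel-verified Lean document; each statement's English description precedes it below -/
import Mathlib

section
/- Let M be a nonempty set, m ≥ 1 an integer, t₁ ∈ ℤ^m, and F_α : {t ∈ ℤ^m : t ≥ t₁} × M → M for α ∈ {1,…,m}. Suppose that for every pair (t₀, x₀) with t₀ ∈ ℤ^m, t₀ ≥ t₁, and x₀ ∈ M, there exists at least one function x : {t ∈ ℤ^m : t ≥ t₀} → M satisfying x(t+1_α) = F_α(t, x(t)) for all t ≥ t₀ and all α ∈ {1,…,m}, and x(t₀) = x₀. Then F_α(t+1_β, F_β(t,x)) = F_β(t+1_α, F_α(t,x)) for all t ≥ t₁, all x ∈ M, and all α, β ∈ {1,…,m}. -/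
/-- Proposition 1 of the paper.
If for every initial point `(t₀, x₀)` with `t₁ ≤ t₀` there exists at least one
solution of the discrete multitime multiple recurrence
`x (t + 1_α) = F α t (x t)` with `x t₀ = x₀`, then the commutation relations
`F α (t + 1_β) (F β t x) = F β (t + 1_α) (F α t x)` hold for all `t ≥ t₁`,
all `x ∈ M` and all `α β`. -/
theorem multitime_recurrence_solvable_implies_compat
    {m : ℕ} (hm : 1 ≤ m) {M : Type*} [Nonempty M]
    (t₁ : Fin m → ℤ)
    (F : Fin m → (Fin m → ℤ) → M → M)
    (hex : ∀ t₀ : Fin m → ℤ, t₁ ≤ t₀ → ∀ x₀ : M,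
      ∃ x : (Fin m → ℤ) → M, x t₀ = x₀ ∧
        ∀ t : Fin m → ℤ, t₀ ≤ t → ∀ α : Fin m,
          x (t + Pi.single α 1) = F α t (x t)) :
    ∀ t : Fin m → ℤ, t₁ ≤ t → ∀ x : M, ∀ α β : Fin m,
      F α (t + Pi.single β 1) (F β t x) = F β (t + Pi.single α 1) (F α t x) := by
  intro t ht x α β
  obtain ⟨y, hy0, hy⟩ := hex t ht x
  have hle : ∀ γ : Fin m, t ≤ t + Pi.single γ 1 := by
    intro γ i
    simp only [Pi.add_apply]
    rcases eq_or_ne i γ with rfl | h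
    · simp
    · simp [Pi.single_eq_of_ne h]
  have h1 := hy (t + Pi.single β 1) (hle β) α
  have h2 := hy (t + Pi.single α 1) (hle α) β
  have hβ := hy t le_rfl β
  have hα := hy t le_rfl α
  rw [hy0] at hβ hα
  rw [hβ] at h1
  rw [hα] at h2
  rw [← h1, ← h2, add_right_comm]
end

section
/- Let M be a nonempty set, m ≥ 1 an integer, t₀ ∈ ℤ^m, and F_α : {t ∈ ℤ^m : t ≥ t₀} × M → M for α ∈ {1,…,m} such that F_α(t+1_β, F_β(t,x)) = F_β(t+1_α, F_α(t,x)) for all t ≥ t₀, all x ∈ M, and all α, β ∈ {1,…,m}. Then for every x₀ ∈ M there exists a unique function x : {t ∈ ℤ^m : t ≥ t₀} → M satisfying x(t+1_α) = F_α(t, x(t)) for all t ≥ t₀ and all α ∈ {1,…,m}, and x(t₀) = x₀. -/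
section aux
variable {m : ℕ} {M : Type*} [Nonempty M]

/-- iterate with fuel -/
noncomputable def mrec (t₀ : Fin m → ℤ) (F : Fin m → (Fin m → ℤ) → M → M) (x₀ : M) :
    ℕ → (Fin m → ℤ) → M
  | 0 => fun _ => x₀
  | (k+1) => fun t =>
      if h : ∃ α, t₀ α < t α then
        F h.choose (t - Pi.single h.choose 1) (mrec t₀ F x₀ k (t - Pi.single h.choose 1))
      else x₀

lemma sum_single (α : Fin m) : ∑ β, (Pi.single α (1:ℤ)) β = 1 := by
  simp [Pi.single_apply]

lemma sum_sub_single (t t₀ : Fin m → ℤ) (α : Fin m) :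
    (∑ β, ((t - Pi.single α 1 : Fin m → ℤ) β - t₀ β)) = (∑ β, (t β - t₀ β)) - 1 := by
  have h : ∑ β, ((t - Pi.single α 1 : Fin m → ℤ) β - t₀ β)
      = (∑ β, (t β - t₀ β)) - ∑ β, (Pi.single α (1:ℤ)) β := by
    rw [← Finset.sum_sub_distrib]
    apply Finset.sum_congr rfl
    intro γ _
    simp only [Pi.sub_apply]; ring
  rw [h, sum_single]

lemma sum_add_single (t t₀ : Fin m → ℤ) (α : Fin m) :
    (∑ β, ((t + Pi.single α 1 : Fin m → ℤ) β - t₀ β)) = (∑ β, (t β - t₀ β)) + 1 := by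
  have h : ∑ β, ((t + Pi.single α 1 : Fin m → ℤ) β - t₀ β)
      = (∑ β, (t β - t₀ β)) + ∑ β, (Pi.single α (1:ℤ)) β := by
    rw [← Finset.sum_add_distrib]
    apply Finset.sum_congr rfl
    intro γ _
    simp only [Pi.add_apply]; ring
  rw [h, sum_single]

lemma le_sub_single (t t₀ : Fin m → ℤ) (α : Fin m) (ht : t₀ ≤ t) (hα : t₀ α < t α) :
    t₀ ≤ t - Pi.single α (1:ℤ) := by
  intro δ
  simp only [Pi.sub_apply, Pi.single_apply]
  by_cases hδ : δ = α
  · have h1 : t₀ δ < t δ := by rw [hδ]; exact hα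
    simp only [if_pos hδ]
    omega
  · simp only [if_neg hδ, sub_zero]; exact ht δ

lemma mrec_spec (t₀ : Fin m → ℤ) (F : Fin m → (Fin m → ℤ) → M → M) (x₀ : M)
    (hcomm : ∀ t : Fin m → ℤ, t₀ ≤ t → ∀ x : M, ∀ α β : Fin m,
      F α (t + Pi.single β 1) (F β t x) = F β (t + Pi.single α 1) (F α t x)) :
    ∀ k : ℕ, ∀ t : Fin m → ℤ, t₀ ≤ t → (∑ β, (t β - t₀ β)) = k →
      ∀ α : Fin m, t₀ α < t α →
      mrec t₀ F x₀ k t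
        = F α (t - Pi.single α 1) (mrec t₀ F x₀ (k-1) (t - Pi.single α 1)) := by
  intro k
  induction k using Nat.strong_induction_on with
  | _ k IH =>
    intro t ht hsum α hα
    have hnn : ∀ β, (0:ℤ) ≤ t β - t₀ β := fun β => sub_nonneg.2 (ht β)
    match k with
    | 0 =>
      exfalso
      have h1 : (0:ℤ) < ∑ β, (t β - t₀ β) :=
        Finset.sum_pos' (fun β _ => hnn β) ⟨α, Finset.mem_univ α, by linarith⟩
      rw [hsum] at h1; exact lt_irrefl 0 h1
    | (j+1) =>
      have hex : ∃ β, t₀ β < t β := ⟨α, hα⟩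
      set β := hex.choose with hβdef
      have hβ : t₀ β < t β := hex.choose_spec
      have hunf : mrec t₀ F x₀ (j+1) t
          = F β (t - Pi.single β 1) (mrec t₀ F x₀ j (t - Pi.single β 1)) := by
        simp only [mrec]
        rw [dif_pos hex]
      by_cases hab : β = α
      · rw [hunf, hab]; rfl
      · have hle2 : (2:ℤ) ≤ ∑ γ, (t γ - t₀ γ) := by
          have h2 : ∑ γ ∈ ({α, β} : Finset (Fin m)), (t γ - t₀ γ)
              ≤ ∑ γ, (t γ - t₀ γ) :=
            Finset.sum_le_sum_of_subset_of_nonneg (Finset.subset_univ _)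
              (fun γ _ _ => hnn γ)
          rw [Finset.sum_pair (Ne.symm hab)] at h2
          have hα' := hnn α; have hβ' := hnn β
          omega
        have hj1 : 1 ≤ j := by
          have h3 : (2:ℤ) ≤ (j:ℤ) + 1 := by
            rw [hsum] at hle2; exact_mod_cast hle2
          omega
        set tβ : Fin m → ℤ := t - Pi.single β 1 with htβdef
        set tα : Fin m → ℤ := t - Pi.single α 1 with htαdef
        set s : Fin m → ℤ := t - Pi.single α 1 - Pi.single β 1 with hsdef
        have htβ : t₀ ≤ tβ := le_sub_single t t₀ β ht hβ
        have htα : t₀ ≤ tα := le_sub_single t t₀ α ht hα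
        have hαβ : t₀ α < tβ α := by
          rw [htβdef]
          simp only [Pi.sub_apply, Pi.single_apply, if_neg (Ne.symm hab), sub_zero]
          exact hα
        have hβα : t₀ β < tα β := by
          rw [htαdef]
          simp only [Pi.sub_apply, Pi.single_apply, if_neg hab, sub_zero]
          exact hβ
        have hs : t₀ ≤ s := by
          rw [hsdef]; exact le_sub_single tα t₀ β htα hβα
        have hsumβ : (∑ γ, (tβ γ - t₀ γ)) = (j : ℤ) := by
          rw [htβdef, sum_sub_single, hsum]; push_cast; ring
        have hsumα : (∑ γ, (tα γ - t₀ γ)) = (j : ℤ) := by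
          rw [htαdef, sum_sub_single, hsum]; push_cast; ring
        have e1 := IH j (Nat.lt_succ_self j) tβ htβ hsumβ α hαβ
        have e2 := IH j (Nat.lt_succ_self j) tα htα hsumα β hβα
        have hcomm' := hcomm s hs (mrec t₀ F x₀ (j-1) s) α β
        have hp1 : tβ - Pi.single α 1 = s := by
          rw [htβdef, hsdef]; funext δ
          simp only [Pi.sub_apply]; ring
        have hp2 : s + Pi.single β 1 = tα := by
          rw [htαdef, hsdef]; funext δ
          simp only [Pi.sub_apply, Pi.add_apply]; ring
        have hp3 : s + Pi.single α 1 = tβ := by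
          rw [htβdef, hsdef]; funext δ
          simp only [Pi.sub_apply, Pi.add_apply]; ring
        rw [hp1] at e1
        have hp4 : tα - Pi.single β 1 = s := by
          rw [htαdef, hsdef]
        rw [hp4] at e2
        rw [hp2, hp3] at hcomm'
        show mrec t₀ F x₀ (j+1) t = F α tα (mrec t₀ F x₀ (j+1-1) tα)
        rw [hunf, e1]
        calc F β tβ (F α s (mrec t₀ F x₀ (j-1) s))
            = F α tα (F β s (mrec t₀ F x₀ (j-1) s)) := hcomm'.symm
          _ = F α tα (mrec t₀ F x₀ j tα) := by rw [← e2]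
          _ = F α tα (mrec t₀ F x₀ (j+1-1) tα) := rfl
end aux

/-- Theorem 2 of the paper.
If the maps `F α` satisfy the commutation relations
`F α (t + 1_β) (F β t x) = F β (t + 1_α) (F α t x)` for all `t ≥ t₀`, `x`, `α`, `β`,
then for every `x₀ ∈ M` there is a unique function `x` on `{t : t₀ ≤ t}` solving
the discrete multitime multiple recurrence `x (t + 1_α) = F α t (x t)` with
`x t₀ = x₀`. -/
theorem multitime_recurrence_existence_uniqueness
    {m : ℕ} (hm : 1 ≤ m) {M : Type*} [Nonempty M]
    (t₀ : Fin m → ℤ)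
    (F : Fin m → (Fin m → ℤ) → M → M)
    (hcomm : ∀ t : Fin m → ℤ, t₀ ≤ t → ∀ x : M, ∀ α β : Fin m,
      F α (t + Pi.single β 1) (F β t x) = F β (t + Pi.single α 1) (F α t x)) :
    ∀ x₀ : M, ∃ x : (Fin m → ℤ) → M,
      (x t₀ = x₀ ∧
        ∀ t : Fin m → ℤ, t₀ ≤ t → ∀ α : Fin m,
          x (t + Pi.single α 1) = F α t (x t)) ∧
      ∀ y : (Fin m → ℤ) → M,
        (y t₀ = x₀ ∧
          ∀ t : Fin m → ℤ, t₀ ≤ t → ∀ α : Fin m,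
            y (t + Pi.single α 1) = F α t (y t)) →
        ∀ t : Fin m → ℤ, t₀ ≤ t → y t = x t := by
  intro x₀
  set x : (Fin m → ℤ) → M := fun t => mrec t₀ F x₀ (∑ β, (t β - t₀ β)).toNat t with hxdef
  have hx0 : x t₀ = x₀ := by
    have h0 : (∑ β, (t₀ β - t₀ β)).toNat = 0 := by simp
    simp only [hxdef, h0]; rfl
  have hrec : ∀ t : Fin m → ℤ, t₀ ≤ t → ∀ α : Fin m,
      x (t + Pi.single α 1) = F α t (x t) := by
    intro t ht α
    have hnn : (0:ℤ) ≤ ∑ β, (t β - t₀ β) :=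
      Finset.sum_nonneg (fun β _ => sub_nonneg.2 (ht β))
    set k : ℕ := (∑ β, (t β - t₀ β)).toNat with hk
    have hksum : (∑ β, (t β - t₀ β)) = (k:ℤ) := (Int.toNat_of_nonneg hnn).symm
    set t' : Fin m → ℤ := t + Pi.single α 1 with ht'def
    have ht' : t₀ ≤ t' := by
      intro δ
      rw [ht'def]
      simp only [Pi.add_apply, Pi.single_apply]
      have h1 : t₀ δ ≤ t δ := ht δ
      by_cases hδ : δ = α
      · simp only [if_pos hδ]; omega
      · simp only [if_neg hδ, add_zero]; exact h1
    have hsum' : (∑ β, (t' β - t₀ β)) = ((k+1 : ℕ) : ℤ) := by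
      rw [ht'def, sum_add_single, hksum]; push_cast; ring
    have hα' : t₀ α < t' α := by
      rw [ht'def]
      simp only [Pi.add_apply, Pi.single_eq_same]
      have h1 : t₀ α ≤ t α := ht α
      omega
    have hcancel : t' - Pi.single α 1 = t := by
      rw [ht'def]; funext δ
      simp only [Pi.add_apply, Pi.sub_apply]; ring
    have key := mrec_spec t₀ F x₀ hcomm (k+1) t' ht' hsum' α hα'
    rw [hcancel] at key
    have htoNat : (∑ β, (t' β - t₀ β)).toNat = k+1 := by
      rw [hsum']; exact Int.toNat_natCast _
    show mrec t₀ F x₀ (∑ β, (t' β - t₀ β)).toNat t' = F α t (x t)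
    rw [htoNat, key]
    rfl
  refine ⟨x, ⟨hx0, hrec⟩, ?_⟩
  rintro y ⟨hy0, hyrec⟩ t ht
  have hnn : (0:ℤ) ≤ ∑ β, (t β - t₀ β) :=
    Finset.sum_nonneg (fun β _ => sub_nonneg.2 (ht β))
  set n : ℕ := (∑ β, (t β - t₀ β)).toNat with hn
  clear_value n
  have hnsum : (∑ β, (t β - t₀ β)) = (n:ℤ) := by rw [hn, Int.toNat_of_nonneg hnn]
  clear hn
  induction n generalizing t with
  | zero =>
    have ht0 : t = t₀ := by
      funext δ
      have hz : ∀ β ∈ Finset.univ, t β - t₀ β = 0 :=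
        (Finset.sum_eq_zero_iff_of_nonneg
          (fun β _ => sub_nonneg.2 (ht β))).1 (by rw [hnsum]; norm_num)
      have := hz δ (Finset.mem_univ δ); omega
    rw [ht0, hy0, hx0]
  | succ n IHn =>
    have hex : ∃ α, t₀ α < t α := by
      by_contra h
      push_neg at h
      have hz : ∀ β ∈ Finset.univ, t β - t₀ β = 0 := by
        intro β _
        have h1 : t₀ β ≤ t β := ht β
        have h2 := h β; omega
      have h0 := Finset.sum_eq_zero hz
      rw [hnsum] at h0
      exact_mod_cast Nat.succ_ne_zero n (by exact_mod_cast h0)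
    obtain ⟨α, hα⟩ := hex
    set tα : Fin m → ℤ := t - Pi.single α 1 with htαdef
    have hts : t₀ ≤ tα := le_sub_single t t₀ α ht hα
    have hcancel : tα + Pi.single α 1 = t := by
      rw [htαdef]; funext δ
      simp only [Pi.add_apply, Pi.sub_apply]; ring
    have hsum' : (∑ β, (tα β - t₀ β)) = (n:ℤ) := by
      rw [htαdef, sum_sub_single, hnsum]; push_cast; ring
    have hnn' : (0:ℤ) ≤ ∑ β, (tα β - t₀ β) :=
      Finset.sum_nonneg (fun β _ => sub_nonneg.2 (hts β))
    have hIH := IHn tα hts hnn' hsum'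
    calc y t = y (tα + Pi.single α 1) := by rw [hcancel]
      _ = F α tα (y tα) := hyrec _ hts α
      _ = F α tα (x tα) := by rw [hIH]
      _ = x (tα + Pi.single α 1) := (hrec _ hts α).symm
      _ = x t := by rw [hcancel]
end

section
/- Let K be a field, n ≥ 1, m ≥ 1, and let Z be either ℤ^m or {t ∈ ℤ^m : t ≥ t₁} for some t₁ ∈ ℤ^m. Let A_α : Z → M_n(K) and b_α : Z → K^n for α ∈ {1,…,m}. If for every (t₀,x₀) ∈ Z × K^n there exists at least one function x : {t ∈ Z : t ≥ t₀} → K^n satisfying x(t+1_α) = A_α(t)x(t) + b_α(t) for all t ≥ t₀ and all α, with x(t₀) = x₀, then for all t ∈ Z and all α, β ∈ {1,…,m}: A_α(t+1_β)A_β(t) = A_β(t+1_α)A_α(t) and A_α(t+1_β)b_β(t) + b_α(t+1_β) = A_β(t+1_α)b_α(t) + b_β(t+1_α). -/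
/-- (Theorem 5 a) of the paper).
If the linear recurrence `x (t + 1_α) = A α t *ᵥ x t + b α t` admits, for every
initial condition `(t₀, x₀) ∈ Z × Kⁿ`, at least one solution on
`{t ∈ Z : t₀ ≤ t}`, then the compatibility relations
`A α (t+1_β) * A β t = A β (t+1_α) * A α t` and
`A α (t+1_β) *ᵥ b β t + b α (t+1_β) = A β (t+1_α) *ᵥ b α t + b β (t+1_α)`
hold for all `t ∈ Z` and all `α β`. Here `Z` is either `ℤ^m` or an upper set
`{t : t₁ ≤ t}`. -/
theorem linear_multitime_recurrence_solvable_implies_compat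
    {m n : ℕ} (hm : 1 ≤ m) (hn : 1 ≤ n) {K : Type*} [Field K]
    (Z : Set (Fin m → ℤ))
    (hZ : Z = Set.univ ∨ ∃ t₁ : Fin m → ℤ, Z = {t | t₁ ≤ t})
    (A : Fin m → (Fin m → ℤ) → Matrix (Fin n) (Fin n) K)
    (b : Fin m → (Fin m → ℤ) → (Fin n → K))
    (hex : ∀ t₀ ∈ Z, ∀ x₀ : Fin n → K,
      ∃ x : (Fin m → ℤ) → (Fin n → K), x t₀ = x₀ ∧
        ∀ t ∈ Z, t₀ ≤ t → ∀ α : Fin m,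
          x (t + Pi.single α 1) = (A α t).mulVec (x t) + b α t) :
    ∀ t ∈ Z, ∀ α β : Fin m,
      A α (t + Pi.single β 1) * A β t = A β (t + Pi.single α 1) * A α t ∧
      (A α (t + Pi.single β 1)).mulVec (b β t) + b α (t + Pi.single β 1)
        = (A β (t + Pi.single α 1)).mulVec (b α t) + b β (t + Pi.single α 1) := by
  intro t ht α β
  have hsingle : ∀ γ : Fin m, (0 : Fin m → ℤ) ≤ Pi.single γ 1 := by
    intro γ i
    rcases eq_or_ne i γ with rfl | h
    · simp
    · simp [Pi.single_apply, h]
  have hle : ∀ (s : Fin m → ℤ) (γ : Fin m), s ≤ s + Pi.single γ 1 := by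
    intro s γ
    exact le_add_of_nonneg_right (hsingle γ)
  have hmem : ∀ s ∈ Z, ∀ γ : Fin m, s + Pi.single γ 1 ∈ Z := by
    intro s hs γ
    rcases hZ with rfl | ⟨t₁, rfl⟩
    · trivial
    · exact le_trans hs (hle s γ)
  set u := t + Pi.single α 1 with hu
  set v := t + Pi.single β 1 with hv
  have hcomm : u + Pi.single β 1 = v + Pi.single α 1 := by
    simp only [hu, hv]; ring
  -- key: for every x₀ the two iterated values agree
  have key : ∀ x₀ : Fin n → K,
      (A β u).mulVec ((A α t).mulVec x₀ + b α t) + b β u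
        = (A α v).mulVec ((A β t).mulVec x₀ + b β t) + b α v := by
    intro x₀
    obtain ⟨x, hx0, hx⟩ := hex t ht x₀
    have h1 : x u = (A α t).mulVec x₀ + b α t := by
      rw [← hx0]; exact hx t ht le_rfl α
    have h2 : x v = (A β t).mulVec x₀ + b β t := by
      rw [← hx0]; exact hx t ht le_rfl β
    have h3 : x (u + Pi.single β 1) = (A β u).mulVec (x u) + b β u :=
      hx u (hmem t ht α) (hle t α) β
    have h4 : x (v + Pi.single α 1) = (A α v).mulVec (x v) + b α v :=
      hx v (hmem t ht β) (hle t β) α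
    rw [← h1, ← h2, ← h3, ← h4, hcomm]
  have keyb := key 0
  simp only [Matrix.mulVec_zero, zero_add] at keyb
  constructor
  · -- matrix part
    have hmv : ∀ x₀ : Fin n → K,
        (A α v * A β t).mulVec x₀ = (A β u * A α t).mulVec x₀ := by
      intro x₀
      have h := key x₀
      simp only [Matrix.mulVec_add, ← Matrix.mulVec_mulVec, add_assoc] at h
      simp only [Matrix.mulVec_mulVec] at h
      rw [keyb] at h
      exact (add_right_cancel h).symm
    ext i j
    have := congrFun (hmv (Pi.single j 1)) i
    simpa [Matrix.mulVec_single] using this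
  · exact keyb.symm
end

section
/- Let K be a field, n ≥ 1, m ≥ 1, and let Z be either ℤ^m or {t ∈ ℤ^m : t ≥ t₁} for some t₁ ∈ ℤ^m. Let A_α : Z → M_n(K) and b_α : Z → K^n for α ∈ {1,…,m} satisfy, for all t ∈ Z and all α, β ∈ {1,…,m}: A_α(t+1_β)A_β(t) = A_β(t+1_α)A_α(t) and A_α(t+1_β)b_β(t) + b_α(t+1_β) = A_β(t+1_α)b_α(t) + b_β(t+1_α). Then for every (t₀,x₀) ∈ Z × K^n there exists a unique function x : {t ∈ Z : t ≥ t₀} → K^n satisfying x(t+1_α) = A_α(t)x(t) + b_α(t) for all t ≥ t₀ and all α, with x(t₀) = x₀. -/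
namespace LMRAux

variable {m n : ℕ} {K : Type*} [Field K]

def step (A : Fin m → (Fin m → ℤ) → Matrix (Fin n) (Fin n) K)
    (b : Fin m → (Fin m → ℤ) → (Fin n → K)) (α : Fin m) (u : Fin m → ℤ)
    (v : Fin n → K) : Fin n → K :=
  (A α u).mulVec v + b α u

def seg (A : Fin m → (Fin m → ℤ) → Matrix (Fin n) (Fin n) K)
    (b : Fin m → (Fin m → ℤ) → (Fin n → K)) (α : Fin m) (u : Fin m → ℤ) :
    ℕ → (Fin n → K) → (Fin n → K)
  | 0, v => v
  | k+1, v => step A b α (u + Pi.single α (k : ℤ)) (seg A b α u k v)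

lemma seg_succ (A : Fin m → (Fin m → ℤ) → Matrix (Fin n) (Fin n) K)
    (b : Fin m → (Fin m → ℤ) → (Fin n → K)) (α : Fin m) (u : Fin m → ℤ)
    (k : ℕ) (v : Fin n → K) :
    seg A b α u (k+1) v = step A b α (u + Pi.single α (k : ℤ)) (seg A b α u k v) := rfl

def pt (t₀ : Fin m → ℤ) (d : Fin m → ℕ) (ℓ : ℕ) : Fin m → ℤ :=
  fun i => t₀ i + if (i : ℕ) < ℓ then (d i : ℤ) else 0

def build (A : Fin m → (Fin m → ℤ) → Matrix (Fin n) (Fin n) K)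
    (b : Fin m → (Fin m → ℤ) → (Fin n → K)) (t₀ : Fin m → ℤ)
    (d : Fin m → ℕ) (x₀ : Fin n → K) : ℕ → (Fin n → K)
  | 0 => x₀
  | ℓ+1 => if h : ℓ < m then
      seg A b ⟨ℓ, h⟩ (pt t₀ d ℓ) (d ⟨ℓ, h⟩) (build A b t₀ d x₀ ℓ)
    else build A b t₀ d x₀ ℓ

lemma build_succ (A : Fin m → (Fin m → ℤ) → Matrix (Fin n) (Fin n) K)
    (b : Fin m → (Fin m → ℤ) → (Fin n → K)) (t₀ : Fin m → ℤ)
    (d : Fin m → ℕ) (x₀ : Fin n → K) {ℓ : ℕ} (h : ℓ < m) :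
    build A b t₀ d x₀ (ℓ+1)
      = seg A b ⟨ℓ, h⟩ (pt t₀ d ℓ) (d ⟨ℓ, h⟩) (build A b t₀ d x₀ ℓ) := by
  rw [build, dif_pos h]

lemma build_succ_ge (A : Fin m → (Fin m → ℤ) → Matrix (Fin n) (Fin n) K)
    (b : Fin m → (Fin m → ℤ) → (Fin n → K)) (t₀ : Fin m → ℤ)
    (d : Fin m → ℕ) (x₀ : Fin n → K) {ℓ : ℕ} (h : ¬ ℓ < m) :
    build A b t₀ d x₀ (ℓ+1) = build A b t₀ d x₀ ℓ := by
  rw [build, dif_neg h]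

lemma pt_zero (t₀ : Fin m → ℤ) (d : Fin m → ℕ) : pt t₀ d 0 = t₀ := by
  funext i; simp [pt]

lemma le_pt (t₀ : Fin m → ℤ) (d : Fin m → ℕ) (ℓ : ℕ) : t₀ ≤ pt t₀ d ℓ := by
  intro i
  simp only [pt]
  split <;> omega

lemma pt_succ (t₀ : Fin m → ℤ) (d : Fin m → ℕ) (γ : Fin m) :
    pt t₀ d (γ.val + 1) = pt t₀ d γ.val + Pi.single γ (d γ : ℤ) := by
  funext i
  simp only [pt, Pi.add_apply, Pi.single_apply]
  rcases eq_or_ne i γ with h | h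
  · subst h; simp
  · have hv : (i : ℕ) ≠ (γ : ℕ) := fun hh => h (Fin.ext hh)
    simp only [if_neg h]
    split_ifs <;> omega

lemma pt_succ_ge (t₀ : Fin m → ℤ) (d : Fin m → ℕ) {ℓ : ℕ} (h : m ≤ ℓ) :
    pt t₀ d (ℓ + 1) = pt t₀ d ℓ := by
  funext i
  have h1 : (i : ℕ) < ℓ := lt_of_lt_of_le i.isLt h
  have h2 : (i : ℕ) < ℓ + 1 := by omega
  simp [pt, h1, h2]

lemma pt_update_le (t₀ : Fin m → ℤ) (d : Fin m → ℕ) (α : Fin m) {ℓ : ℕ}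
    (h : ℓ ≤ α.val) :
    pt t₀ (Function.update d α (d α + 1)) ℓ = pt t₀ d ℓ := by
  funext i
  simp only [pt]
  rcases eq_or_ne i α with h' | h'
  · subst h'
    have : ¬ ((i : ℕ) < ℓ) := by omega
    simp [this]
  · simp [Function.update_of_ne h']

lemma pt_update_gt (t₀ : Fin m → ℤ) (d : Fin m → ℕ) (α : Fin m) {ℓ : ℕ}
    (h : α.val < ℓ) :
    pt t₀ (Function.update d α (d α + 1)) ℓ = pt t₀ d ℓ + Pi.single α 1 := by
  funext i
  simp only [pt, Pi.add_apply, Pi.single_apply]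
  rcases eq_or_ne i α with h' | h'
  · subst h'
    have h2 : (i : ℕ) < ℓ := h
    simp only [Function.update_self, if_pos h2, if_pos rfl]
    push_cast
    ring
  · simp only [Function.update_of_ne h', if_neg h']
    split_ifs <;> omega

/-- The swap lemma: a single `α`-step commutes with `k` `β`-steps. -/
lemma seg_step_comm (A : Fin m → (Fin m → ℤ) → Matrix (Fin n) (Fin n) K)
    (b : Fin m → (Fin m → ℤ) → (Fin n → K)) (t₀ : Fin m → ℤ)
    (hsw : ∀ u : Fin m → ℤ, t₀ ≤ u → ∀ α β : Fin m, ∀ v : Fin n → K,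
      step A b β (u + Pi.single α 1) (step A b α u v)
        = step A b α (u + Pi.single β 1) (step A b β u v))
    (α β : Fin m) (u : Fin m → ℤ) (hu : t₀ ≤ u) (k : ℕ) (v : Fin n → K) :
    seg A b β (u + Pi.single α 1) k (step A b α u v)
      = step A b α (u + Pi.single β (k : ℤ)) (seg A b β u k v) := by
  induction k with
  | zero => simp [seg]
  | succ k ih =>
      have hui : ∀ i, t₀ i ≤ u i := fun i => hu i
      have hpt : u + Pi.single α 1 + Pi.single β (k : ℤ)
          = (u + Pi.single β (k : ℤ)) + Pi.single α 1 := by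
        funext i; simp only [Pi.add_apply, Pi.single_apply]; ring
      have hu' : t₀ ≤ u + Pi.single β (k : ℤ) := by
        intro i
        have := hui i
        simp only [Pi.add_apply, Pi.single_apply]
        split <;> omega
      have hpt2 : (u + Pi.single β (k : ℤ)) + Pi.single β 1
          = u + Pi.single β (((k+1 : ℕ)) : ℤ) := by
        funext i; simp only [Pi.add_apply, Pi.single_apply]
        split_ifs <;> push_cast <;> ring
      rw [seg_succ, seg_succ, hpt, ih, hsw _ hu', hpt2]

lemma build_zero (A : Fin m → (Fin m → ℤ) → Matrix (Fin n) (Fin n) K)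
    (b : Fin m → (Fin m → ℤ) → (Fin n → K)) (t₀ : Fin m → ℤ)
    (d : Fin m → ℕ) (x₀ : Fin n → K) (hd : ∀ i, d i = 0) (ℓ : ℕ) :
    build A b t₀ d x₀ ℓ = x₀ := by
  induction ℓ with
  | zero => rfl
  | succ ℓ ih =>
      by_cases h : ℓ < m
      · rw [build_succ A b t₀ d x₀ h, hd, ih]; rfl
      · rw [build_succ_ge A b t₀ d x₀ h, ih]

/-- Key lemma: incrementing `d` at `α` applies one `α`-step at the right place. -/
lemma build_update (A : Fin m → (Fin m → ℤ) → Matrix (Fin n) (Fin n) K)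
    (b : Fin m → (Fin m → ℤ) → (Fin n → K)) (t₀ : Fin m → ℤ)
    (hsw : ∀ u : Fin m → ℤ, t₀ ≤ u → ∀ α β : Fin m, ∀ v : Fin n → K,
      step A b β (u + Pi.single α 1) (step A b α u v)
        = step A b α (u + Pi.single β 1) (step A b β u v))
    (d : Fin m → ℕ) (x₀ : Fin n → K) (α : Fin m) : ∀ ℓ : ℕ,
    (ℓ ≤ α.val → build A b t₀ (Function.update d α (d α + 1)) x₀ ℓ
        = build A b t₀ d x₀ ℓ) ∧
    (α.val < ℓ → build A b t₀ (Function.update d α (d α + 1)) x₀ ℓ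
        = step A b α (pt t₀ d ℓ) (build A b t₀ d x₀ ℓ)) := by
  intro ℓ
  induction ℓ with
  | zero => exact ⟨fun _ => rfl, fun h => absurd h (by omega)⟩
  | succ ℓ ih =>
      constructor
      · intro hle
        have hℓ : ℓ < m := lt_of_lt_of_le (by omega) α.isLt.le
        have hne : (⟨ℓ, hℓ⟩ : Fin m) ≠ α := by
          intro h; apply absurd (congrArg Fin.val h); simp; omega
        rw [build_succ A b t₀ _ x₀ hℓ, build_succ A b t₀ d x₀ hℓ, ih.1 (by omega),
          pt_update_le t₀ d α (by omega), Function.update_of_ne hne]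
      · intro hlt
        rcases Nat.lt_or_ge α.val ℓ with hl | hg
        · -- α.val < ℓ
          by_cases hℓ : ℓ < m
          · have hne : (⟨ℓ, hℓ⟩ : Fin m) ≠ α := by
              intro h; apply absurd (congrArg Fin.val h); simp; omega
            rw [build_succ A b t₀ _ x₀ hℓ, build_succ A b t₀ d x₀ hℓ, ih.2 hl,
              pt_update_gt t₀ d α hl, Function.update_of_ne hne,
              seg_step_comm A b t₀ hsw α ⟨ℓ, hℓ⟩ _ (le_pt t₀ d ℓ)]
            have hp : pt t₀ d ℓ + Pi.single (⟨ℓ, hℓ⟩ : Fin m) ((d ⟨ℓ, hℓ⟩ : ℤ))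
                = pt t₀ d (ℓ + 1) := (pt_succ t₀ d ⟨ℓ, hℓ⟩).symm
            rw [hp]
          · rw [build_succ_ge A b t₀ _ x₀ hℓ, build_succ_ge A b t₀ d x₀ hℓ,
              ih.2 hl, pt_succ_ge t₀ d (by omega)]
        · -- α.val = ℓ
          have hα : α.val = ℓ := by omega
          have hℓ : ℓ < m := hα ▸ α.isLt
          have heq : (⟨ℓ, hℓ⟩ : Fin m) = α := Fin.ext (by simp [hα])
          have hpt' : pt t₀ d (ℓ + 1) = pt t₀ d ℓ + Pi.single α ((d α : ℤ)) := by
            have h0 := pt_succ t₀ d α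
            rw [hα] at h0
            exact h0
          rw [build_succ A b t₀ _ x₀ hℓ, build_succ A b t₀ d x₀ hℓ, heq,
            ih.1 (by omega), pt_update_le t₀ d α (by omega), Function.update_self,
            seg_succ, hpt']

end LMRAux


open LMRAux

/-- (Theorem 5 b) of the paper).
If the compatibility relations
`A α (t+1_β) * A β t = A β (t+1_α) * A α t` and
`A α (t+1_β) *ᵥ b β t + b α (t+1_β) = A β (t+1_α) *ᵥ b α t + b β (t+1_α)`
hold for all `t ∈ Z` and all `α β`, then for every `(t₀, x₀) ∈ Z × Kⁿ` there is a
unique function on `{t ∈ Z : t₀ ≤ t}` solving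
`x (t + 1_α) = A α t *ᵥ x t + b α t` with `x t₀ = x₀`. Here `Z` is either `ℤ^m`
or an upper set `{t : t₁ ≤ t}`. -/
theorem linear_multitime_recurrence_existence_uniqueness
    {m n : ℕ} (hm : 1 ≤ m) (hn : 1 ≤ n) {K : Type*} [Field K]
    (Z : Set (Fin m → ℤ))
    (hZ : Z = Set.univ ∨ ∃ t₁ : Fin m → ℤ, Z = {t | t₁ ≤ t})
    (A : Fin m → (Fin m → ℤ) → Matrix (Fin n) (Fin n) K)
    (b : Fin m → (Fin m → ℤ) → (Fin n → K))
    (hcompat : ∀ t ∈ Z, ∀ α β : Fin m,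
      A α (t + Pi.single β 1) * A β t = A β (t + Pi.single α 1) * A α t ∧
      (A α (t + Pi.single β 1)).mulVec (b β t) + b α (t + Pi.single β 1)
        = (A β (t + Pi.single α 1)).mulVec (b α t) + b β (t + Pi.single α 1)) :
    ∀ t₀ ∈ Z, ∀ x₀ : Fin n → K,
      ∃ x : (Fin m → ℤ) → (Fin n → K),
        (x t₀ = x₀ ∧
          ∀ t ∈ Z, t₀ ≤ t → ∀ α : Fin m,
            x (t + Pi.single α 1) = (A α t).mulVec (x t) + b α t) ∧
        ∀ y : (Fin m → ℤ) → (Fin n → K),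
          (y t₀ = x₀ ∧
            ∀ t ∈ Z, t₀ ≤ t → ∀ α : Fin m,
              y (t + Pi.single α 1) = (A α t).mulVec (y t) + b α t) →
          ∀ t ∈ Z, t₀ ≤ t → y t = x t := by
  intro t₀ ht₀ x₀
  -- membership of upper points in Z
  have hmem : ∀ u : Fin m → ℤ, t₀ ≤ u → u ∈ Z := by
    intro u hu
    rcases hZ with h | ⟨t₁, h⟩
    · rw [h]; trivial
    · rw [h] at ht₀ ⊢
      exact le_trans ht₀ hu
  -- the swap property
  have hsw : ∀ u : Fin m → ℤ, t₀ ≤ u → ∀ α β : Fin m, ∀ v : Fin n → K,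
      step A b β (u + Pi.single α 1) (step A b α u v)
        = step A b α (u + Pi.single β 1) (step A b β u v) := by
    intro u hu α β v
    obtain ⟨h1, h2⟩ := hcompat u (hmem u hu) α β
    simp only [step, Matrix.mulVec_add, Matrix.mulVec_mulVec]
    rw [← h1, add_assoc, add_assoc, ← h2]
  set x : (Fin m → ℤ) → (Fin n → K) :=
    fun t => build A b t₀ (fun i => (t i - t₀ i).toNat) x₀ m with hx
  have hx0 : x t₀ = x₀ := by
    rw [hx]
    exact build_zero A b t₀ _ x₀ (fun i => by simp) m
  -- the recurrence for x (only needs t₀ ≤ t)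
  have hxrec : ∀ t : Fin m → ℤ, t₀ ≤ t → ∀ α : Fin m,
      x (t + Pi.single α 1) = (A α t).mulVec (x t) + b α t := by
    intro t ht α
    have ht' : ∀ j, t₀ j ≤ t j := fun j => ht j
    have hd' : (fun i => ((t + Pi.single α 1 : Fin m → ℤ) i - t₀ i).toNat)
        = Function.update (fun i => (t i - t₀ i).toNat) α ((t α - t₀ α).toNat + 1) := by
      funext i
      rcases eq_or_ne i α with h | h
      · subst h
        have h1 := ht' i
        simp only [Pi.add_apply, Pi.single_apply, Function.update_self, if_true]
        omega
      · simp only [Pi.add_apply, Pi.single_apply, if_neg h, Function.update_of_ne h]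
        omega
    have hpm : pt t₀ (fun i => (t i - t₀ i).toNat) m = t := by
      funext i
      have h1 := ht' i
      simp only [pt, if_pos i.isLt]
      omega
    have hb := (build_update A b t₀ hsw (fun i => (t i - t₀ i).toNat) x₀ α m).2 α.isLt
    show build A b t₀ (fun i => ((t + Pi.single α 1 : Fin m → ℤ) i - t₀ i).toNat) x₀ m
        = (A α t).mulVec (x t) + b α t
    rw [hd', hb, hpm]
    rfl
  refine ⟨x, ⟨hx0, fun t _ ht α => hxrec t ht α⟩, ?_⟩
  rintro y ⟨hy0, hyrec⟩
  -- uniqueness by induction on the ℓ¹ distance to t₀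
  have key : ∀ N : ℕ, ∀ t : Fin m → ℤ, t₀ ≤ t →
      (∑ i, (t i - t₀ i).toNat) = N → y t = x t := by
    intro N
    induction N with
    | zero =>
        intro t ht hsum
        have : t = t₀ := by
          funext i
          have h1 : (t i - t₀ i).toNat = 0 :=
            Finset.sum_eq_zero_iff.mp hsum i (Finset.mem_univ i)
          have h2 : t₀ i ≤ t i := ht i
          omega
        rw [this, hy0, hx0]
    | succ N ih =>
        intro t ht hsum
        have hex : ∃ α : Fin m, (t α - t₀ α).toNat ≠ 0 := by
          by_contra h
          push_neg at h
          rw [Finset.sum_eq_zero (fun i _ => h i)] at hsum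
          omega
        obtain ⟨α, hα⟩ := hex
        set s : Fin m → ℤ := t - Pi.single α 1 with hs
        have hst : s + Pi.single α 1 = t := by
          funext i; simp [hs]
        have hts : t₀ ≤ s := by
          intro i
          have h3 : t₀ i ≤ t i := ht i
          have hα' := hα
          simp only [hs, Pi.sub_apply, Pi.single_apply]
          rcases eq_or_ne i α with h | h
          · subst h; simp only [if_pos rfl]; omega
          · simp only [if_neg h]; omega
        have hsum' : (∑ i, (s i - t₀ i).toNat) = N := by
          have hcong : ∀ i ∈ Finset.univ, (t i - t₀ i).toNat
              = (s i - t₀ i).toNat + (if i = α then 1 else 0) := by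
            intro i _
            have h1 : t₀ i ≤ t i := ht i
            have h2 : t₀ i ≤ s i := hts i
            have hsi : s i = t i - (if i = α then 1 else 0 : ℤ) := by
              simp [hs, Pi.single_apply]
            rcases eq_or_ne i α with h | h
            · subst h
              rw [if_pos rfl] at hsi
              rw [if_pos rfl]
              omega
            · rw [if_neg h] at hsi
              rw [if_neg h]
              omega
          rw [Finset.sum_congr rfl hcong, Finset.sum_add_distrib,
            Finset.sum_ite_eq' Finset.univ α (fun _ => 1)] at hsum
          simp only [Finset.mem_univ, if_true] at hsum
          omega
        have hys : y s = x s := ih s hts hsum'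
        calc y t = y (s + Pi.single α 1) := by rw [hst]
          _ = (A α s).mulVec (y s) + b α s := hyrec s (hmem s hts) hts α
          _ = (A α s).mulVec (x s) + b α s := by rw [hys]
          _ = x (s + Pi.single α 1) := (hxrec s hts α).symm
          _ = x t := by rw [hst]
  intro t _ ht
  exact key (∑ i, (t i - t₀ i).toNat) t ht rfl
end

section
/- Let K be a field, n ≥ 1, m ≥ 1, and A_α : ℤ^m → M_n(K), b_α : ℤ^m → K^n for α ∈ {1,…,m}. The following are equivalent: (i) for every α and every t ∈ ℤ^m the matrix A_α(t) is invertible, and for all t ∈ ℤ^m and all α, β the identities A_α(t+1_β)A_β(t) = A_β(t+1_α)A_α(t) and A_α(t+1_β)b_β(t) + b_α(t+1_β) = A_β(t+1_α)b_α(t) + b_β(t+1_α) hold; (ii) for every (t₀,x₀) ∈ ℤ^m × K^n and every α₀ ∈ {1,…,m} there exists at least one function x : {t ∈ ℤ^m : t ≥ t₀ − 1_{α₀}} → K^n satisfying x(t+1_α) = A_α(t)x(t) + b_α(t) for all t ≥ t₀ − 1_{α₀} and all α, with x(t₀) = x₀; (iii) for every (t₀,x₀) and every α₀ such a function on {t ≥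 t₀ − 1_{α₀}} exists and is unique; (iv) for all t₀, t₁ ∈ ℤ^m with t₁ ≤ t₀ and every x₀ ∈ K^n there is a unique function x : {t ∈ ℤ^m : t ≥ t₁} → K^n satisfying the recurrence for all t ≥ t₁ and the condition x(t₀) = x₀; (v) for every (t₀,x₀) ∈ ℤ^m × K^n there is a unique function x : ℤ^m → K^n satisfying the recurrence for all t ∈ ℤ^m and x(t₀) = x₀. -/
/-! Under (i) the one-step maps `advance α`, acting on whole sections `ℤ^m → K^n`, are commuting
permutations, so they generate an action of `ℤ^m`; evaluating at `t` the translate by `t - t₀` of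
the constant section `x₀` gives a global solution. Two solutions on a cone `t₁ ≤ t` that agree at
`t₀` agree forward up to `t ⊔ t₀`, and, the `A α t` being invertible, backward from there down to
any `t` of the cone. Conversely, solvability from arbitrary data at `t + 1_α` makes `A α t`
surjective, and computing `x (t + 1_α + 1_β)` along the two paths from an arbitrary value `x t`
yields the compatibility identities as an equality of affine maps. -/

open Matrix Set

theorem Pi.int_nonneg_induction {ι : Type*} [Fintype ι] [DecidableEq ι]
    {P : (ι → ℤ) → Prop} (zero : P 0)
    (add_single : ∀ k, 0 ≤ k → P k → ∀ α, P (k + Pi.single α 1)) {k : ι → ℤ} (hk : 0 ≤ k) :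
    P k := by
  have hmem : k ∈ AddSubmonoid.closure (range fun α => (Pi.single α 1 : ι → ℤ)) := by
    rw [← Finset.univ_sum_single k]
    refine AddSubmonoid.sum_mem _ fun α _ => ?_
    have hα : Pi.single α (k α) = (k α).toNat • (Pi.single α 1 : ι → ℤ) := by
      rw [← Pi.single_smul', nsmul_one, Int.toNat_of_nonneg (hk α)]
    rw [hα]
    exact AddSubmonoid.nsmul_mem _ (AddSubmonoid.subset_closure (mem_range_self α)) _
  refine (AddSubmonoid.closure_induction_right (motive := fun k _ => 0 ≤ k ∧ P k)
    ⟨le_rfl, zero⟩ ?_ hmem).2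
  rintro k - _ ⟨α, rfl⟩ ⟨hk, hPk⟩
  exact ⟨add_nonneg hk (Pi.single_nonneg.2 zero_le_one), add_single k hk hPk α⟩

theorem Matrix.eq_and_eq_of_forall_mulVec_add_eq {m n R : Type*} [Fintype n] [CommRing R]
    {M M' : Matrix m n R} {c c' : m → R} (h : ∀ w, M *ᵥ w + c = M' *ᵥ w + c') :
    M = M' ∧ c = c' := by
  have hc : c = c' := by simpa using h 0
  exact ⟨ext_iff_mulVec.2 fun w => add_right_cancel (hc ▸ h w), hc⟩

namespace MultitimeRecurrence

variable {ι σ R : Type*} [DecidableEq ι] [Fintype σ] [CommRing R]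

section Definitions

variable (A : ι → (ι → ℤ) → Matrix σ σ R) (b : ι → (ι → ℤ) → σ → R)

def IsSolutionOn (s : Set (ι → ℤ)) (x : (ι → ℤ) → σ → R) : Prop :=
  ∀ t ∈ s, ∀ α, x (t + Pi.single α 1) = A α t *ᵥ x t + b α t

def Compatible : Prop :=
  ∀ t α β, A α (t + Pi.single β 1) * A β t = A β (t + Pi.single α 1) * A α t ∧
    A α (t + Pi.single β 1) *ᵥ b β t + b α (t + Pi.single β 1) =
      A β (t + Pi.single α 1) *ᵥ b α t + b β (t + Pi.single α 1)

end Definitions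

variable {A : ι → (ι → ℤ) → Matrix σ σ R} {b : ι → (ι → ℤ) → σ → R}
  {s s' : Set (ι → ℤ)} {x y : (ι → ℤ) → σ → R}

theorem IsSolutionOn.mono (hx : IsSolutionOn A b s x) (h : s' ⊆ s) : IsSolutionOn A b s' x :=
  fun t ht => hx t (h ht)

section Uniqueness

variable [Fintype ι] {t₁ t₀ t : ι → ℤ} {k : ι → ℤ}

theorem IsSolutionOn.eq_add_of_eq (hx : IsSolutionOn A b (Ici t₁) x)
    (hy : IsSolutionOn A b (Ici t₁) y) (ht : t₁ ≤ t) (h : x t = y t) (hk : 0 ≤ k) :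
    x (t + k) = y (t + k) := by
  refine Pi.int_nonneg_induction (P := fun k => x (t + k) = y (t + k)) (by simpa) ?_ hk
  intro k hk ih α
  have htk : t₁ ≤ t + k := ht.trans (le_add_of_nonneg_right hk)
  rw [← add_assoc, hx _ htk, hy _ htk, ih]

variable [DecidableEq σ]

theorem IsSolutionOn.eq_of_eq_add (hA : ∀ α t, IsUnit (A α t))
    (hx : IsSolutionOn A b (Ici t₁) x) (hy : IsSolutionOn A b (Ici t₁) y) (hk : 0 ≤ k)
    (ht : t₁ ≤ t) (h : x (t + k) = y (t + k)) : x t = y t := by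
  refine Pi.int_nonneg_induction (P := fun k => ∀ t, t₁ ≤ t → x (t + k) = y (t + k) → x t = y t)
    (by simp) ?_ hk t ht h
  intro k hk ih α t ht h
  have htk : t₁ ≤ t + k := ht.trans (le_add_of_nonneg_right hk)
  rw [← add_assoc, hx _ htk, hy _ htk] at h
  exact ih t ht (mulVec_injective_of_isUnit (hA α _) (add_right_cancel h))

theorem IsSolutionOn.eqOn_Ici (hA : ∀ α t, IsUnit (A α t))
    (hx : IsSolutionOn A b (Ici t₁) x) (hy : IsSolutionOn A b (Ici t₁) y) (h₀ : t₁ ≤ t₀)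
    (h : x t₀ = y t₀) : EqOn x y (Ici t₁) := by
  intro t ht
  have hsup := hx.eq_add_of_eq hy h₀ h (sub_nonneg.2 (le_sup_right : t₀ ≤ t ⊔ t₀))
  rw [add_sub_cancel] at hsup
  exact hx.eq_of_eq_add hA hy (sub_nonneg.2 (le_sup_left : t ≤ t ⊔ t₀)) ht
    (by rwa [add_sub_cancel])

theorem IsSolutionOn.eq_of_univ (hA : ∀ α t, IsUnit (A α t)) (hx : IsSolutionOn A b univ x)
    (hy : IsSolutionOn A b univ y) {t₀ : ι → ℤ} (h : x t₀ = y t₀) : x = y :=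
  funext fun t => (hx.mono (subset_univ _)).eqOn_Ici hA (hy.mono (subset_univ _))
    (inf_le_right : t ⊓ t₀ ≤ t₀) h (inf_le_left : t ⊓ t₀ ≤ t)

end Uniqueness

section Existence

variable [DecidableEq σ]

variable (A b) in
noncomputable def advance (hA : ∀ α t, IsUnit (A α t)) (α : ι) :
    Equiv.Perm ((ι → ℤ) → σ → R) where
  toFun u t := A α (t - Pi.single α 1) *ᵥ u (t - Pi.single α 1) + b α (t - Pi.single α 1)
  invFun u t := (A α t)⁻¹ *ᵥ (u (t + Pi.single α 1) - b α t)
  left_inv u := funext fun t => by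
    simp [mulVec_mulVec, nonsing_inv_mul _ ((isUnit_iff_isUnit_det _).1 (hA α t))]
  right_inv u := funext fun t => by
    simp [mulVec_mulVec, mul_nonsing_inv _ ((isUnit_iff_isUnit_det _).1 (hA α _))]

variable {hA : ∀ α t, IsUnit (A α t)}

theorem advance_apply_add_single (α : ι) (u : (ι → ℤ) → σ → R) (t : ι → ℤ) :
    advance A b hA α u (t + Pi.single α 1) = A α t *ᵥ u t + b α t := by
  simp [advance]

theorem commute_advance (hc : Compatible A b) (α β : ι) :
    Commute (advance A b hA α) (advance A b hA β) := by
  refine Equiv.ext fun u => funext fun s => ?_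
  obtain ⟨t, rfl⟩ : ∃ t, s = t + Pi.single β 1 + Pi.single α 1 :=
    ⟨s - Pi.single α 1 - Pi.single β 1, by abel⟩
  have hs : t + Pi.single β 1 + Pi.single α 1 = t + Pi.single α 1 + Pi.single β 1 :=
    add_right_comm _ _ _
  simp only [Equiv.Perm.mul_apply]
  rw [advance_apply_add_single, advance_apply_add_single, hs, advance_apply_add_single,
    advance_apply_add_single, mulVec_add, mulVec_add, mulVec_mulVec, mulVec_mulVec,
    add_assoc, add_assoc, (hc t α β).1, (hc t α β).2]

variable [Fintype ι]

variable (hA) in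
noncomputable def flow (hc : Compatible A b) (k : ι → ℤ) : Equiv.Perm ((ι → ℤ) → σ → R) :=
  MonoidHom.noncommPiCoprod (fun α => zpowersHom _ (advance A b hA α))
    (fun α β _ p q => (commute_advance (hA := hA) hc α β).zpow_zpow p.toAdd q.toAdd)
    (fun α => .ofAdd (k α))

theorem flow_zero (hc : Compatible A b) : flow hA hc 0 = 1 :=
  map_one (MonoidHom.noncommPiCoprod _ _)

theorem flow_add (hc : Compatible A b) (k l : ι → ℤ) :
    flow hA hc (k + l) = flow hA hc k * flow hA hc l := by
  rw [flow, flow, flow, ← map_mul]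
  rfl

theorem flow_single (hc : Compatible A b) (α : ι) :
    flow hA hc (Pi.single α 1) = advance A b hA α := by
  have h : (fun β => Multiplicative.ofAdd ((Pi.single α 1 : ι → ℤ) β)) =
      Pi.mulSingle α (.ofAdd 1) :=
    funext fun β => (Pi.mulSingle_multiplicativeOfAdd_eq α 1 β).symm
  rw [flow, h]
  exact (MonoidHom.noncommPiCoprod_mulSingle ..).trans (zpow_one _)

theorem exists_isSolutionOn_univ (hA : ∀ α t, IsUnit (A α t)) (hc : Compatible A b)
    (t₀ : ι → ℤ) (x₀ : σ → R) : ∃ x, x t₀ = x₀ ∧ IsSolutionOn A b univ x := by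
  refine ⟨fun t => flow hA hc (t - t₀) (fun _ => x₀) t, by simp [flow_zero], fun t _ α => ?_⟩
  have hk : t + Pi.single α 1 - t₀ = Pi.single α 1 + (t - t₀) := by abel
  simp only [hk, flow_add, flow_single, Equiv.Perm.mul_apply, advance_apply_add_single]

theorem exists_isSolutionOn_Ici_eqOn (hA : ∀ α t, IsUnit (A α t)) (hc : Compatible A b)
    {t₀ t₁ : ι → ℤ} (h : t₁ ≤ t₀) (x₀ : σ → R) :
    ∃ x, (x t₀ = x₀ ∧ IsSolutionOn A b (Ici t₁) x) ∧
      ∀ y, (y t₀ = x₀ ∧ IsSolutionOn A b (Ici t₁) y) → EqOn y x (Ici t₁) := by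
  obtain ⟨x, hx₀, hx⟩ := exists_isSolutionOn_univ hA hc t₀ x₀
  have hx' := hx.mono (subset_univ (Ici t₁))
  exact ⟨x, ⟨hx₀, hx'⟩, fun y ⟨hy₀, hy⟩ => hy.eqOn_Ici hA hx' h (hy₀.trans hx₀.symm)⟩

end Existence

section Necessity

variable {t : ι → ℤ}

theorem IsSolutionOn.two_step_eq (hx : IsSolutionOn A b (Ici t) x) (α β : ι) :
    A α (t + Pi.single β 1) *ᵥ (A β t *ᵥ x t + b β t) + b α (t + Pi.single β 1) =
      A β (t + Pi.single α 1) *ᵥ (A α t *ᵥ x t + b α t) + b β (t + Pi.single α 1) := by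
  have hle (γ : ι) : t ≤ t + Pi.single γ 1 :=
    le_add_of_nonneg_right (Pi.single_nonneg.2 zero_le_one)
  rw [← hx t self_mem_Ici β, ← hx _ (hle β) α, ← hx t self_mem_Ici α, ← hx _ (hle α) β,
    add_right_comm]

theorem compat_of_forall_exists (h : ∀ w, ∃ x, x t = w ∧ IsSolutionOn A b (Ici t) x) (α β : ι) :
    A α (t + Pi.single β 1) * A β t = A β (t + Pi.single α 1) * A α t ∧
      A α (t + Pi.single β 1) *ᵥ b β t + b α (t + Pi.single β 1) =
        A β (t + Pi.single α 1) *ᵥ b α t + b β (t + Pi.single α 1) := by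
  refine Matrix.eq_and_eq_of_forall_mulVec_add_eq fun w => ?_
  obtain ⟨x, rfl, hx⟩ := h w
  simpa only [mulVec_add, mulVec_mulVec, add_assoc] using hx.two_step_eq α β

theorem isUnit_of_forall_exists [DecidableEq σ] {α : ι}
    (h : ∀ v, ∃ x, x (t + Pi.single α 1) = v ∧ IsSolutionOn A b {t} x) : IsUnit (A α t) := by
  rw [← mulVec_surjective_iff_isUnit]
  intro v
  obtain ⟨x, hx₁, hx⟩ := h (v + b α t)
  exact ⟨x t, add_right_cancel ((hx t rfl α).symm.trans hx₁)⟩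

end Necessity

end MultitimeRecurrence

open MultitimeRecurrence

theorem linear_multitime_recurrence_tfae_general
    {m n : ℕ} {K : Type*} [Field K]
    (A : Fin m → (Fin m → ℤ) → Matrix (Fin n) (Fin n) K)
    (b : Fin m → (Fin m → ℤ) → (Fin n → K)) :
    List.TFAE [
      -- (i)
      (∀ (α : Fin m) (t : Fin m → ℤ), IsUnit (A α t)) ∧
        (∀ (t : Fin m → ℤ) (α β : Fin m),
          A α (t + Pi.single β 1) * A β t = A β (t + Pi.single α 1) * A α t ∧
          (A α (t + Pi.single β 1)).mulVec (b β t) + b α (t + Pi.single β 1)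
            = (A β (t + Pi.single α 1)).mulVec (b α t) + b β (t + Pi.single α 1)),
      -- (ii)
      ∀ (t₀ : Fin m → ℤ) (x₀ : Fin n → K) (α₀ : Fin m),
        ∃ x : (Fin m → ℤ) → (Fin n → K), x t₀ = x₀ ∧
          ∀ t : Fin m → ℤ, t₀ - Pi.single α₀ 1 ≤ t → ∀ α : Fin m,
            x (t + Pi.single α 1) = (A α t).mulVec (x t) + b α t,
      -- (iii)
      ∀ (t₀ : Fin m → ℤ) (x₀ : Fin n → K) (α₀ : Fin m),
        ∃ x : (Fin m → ℤ) → (Fin n → K),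
          (x t₀ = x₀ ∧
            ∀ t : Fin m → ℤ, t₀ - Pi.single α₀ 1 ≤ t → ∀ α : Fin m,
              x (t + Pi.single α 1) = (A α t).mulVec (x t) + b α t) ∧
          ∀ y : (Fin m → ℤ) → (Fin n → K),
            (y t₀ = x₀ ∧
              ∀ t : Fin m → ℤ, t₀ - Pi.single α₀ 1 ≤ t → ∀ α : Fin m,
                y (t + Pi.single α 1) = (A α t).mulVec (y t) + b α t) →
            ∀ t : Fin m → ℤ, t₀ - Pi.single α₀ 1 ≤ t → y t = x t,
      -- (iv)
      ∀ (t₀ t₁ : Fin m → ℤ), t₁ ≤ t₀ → ∀ x₀ : Fin n → K,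
        ∃ x : (Fin m → ℤ) → (Fin n → K),
          (x t₀ = x₀ ∧
            ∀ t : Fin m → ℤ, t₁ ≤ t → ∀ α : Fin m,
              x (t + Pi.single α 1) = (A α t).mulVec (x t) + b α t) ∧
          ∀ y : (Fin m → ℤ) → (Fin n → K),
            (y t₀ = x₀ ∧
              ∀ t : Fin m → ℤ, t₁ ≤ t → ∀ α : Fin m,
                y (t + Pi.single α 1) = (A α t).mulVec (y t) + b α t) →
            ∀ t : Fin m → ℤ, t₁ ≤ t → y t = x t,
      -- (v)
      ∀ (t₀ : Fin m → ℤ) (x₀ : Fin n → K),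
        ∃! x : (Fin m → ℤ) → (Fin n → K), x t₀ = x₀ ∧
          ∀ (t : Fin m → ℤ) (α : Fin m),
            x (t + Pi.single α 1) = (A α t).mulVec (x t) + b α t
    ] := by
  have cone_le (t₀ : Fin m → ℤ) (α₀ : Fin m) : t₀ - Pi.single α₀ 1 ≤ t₀ :=
    sub_le_self _ (Pi.single_nonneg.2 zero_le_one)
  tfae_have 1 → 4 := fun ⟨hA, hc⟩ t₀ t₁ h x₀ => exists_isSolutionOn_Ici_eqOn hA hc h x₀
  tfae_have 4 → 3 := fun h t₀ x₀ α₀ => h t₀ _ (cone_le t₀ α₀) x₀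
  tfae_have 3 → 2 := fun h t₀ x₀ α₀ => (h t₀ x₀ α₀).imp fun _ hx => hx.1
  tfae_have 1 → 5 := by
    rintro ⟨hA, hc⟩ t₀ x₀
    obtain ⟨x, hx₀, hx⟩ := exists_isSolutionOn_univ hA hc t₀ x₀
    refine ⟨x, ⟨hx₀, fun t α => hx t trivial α⟩, fun y ⟨hy₀, hy⟩ => ?_⟩
    exact (hx.eq_of_univ hA (fun t _ α => hy t α) (hx₀.trans hy₀.symm)).symm
  tfae_have 5 → 2 := fun h t₀ x₀ _ =>
    (h t₀ x₀).exists.imp fun _ hx => ⟨hx.1, fun t _ α => hx.2 t α⟩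
  tfae_have 2 → 1 := by
    intro h
    refine ⟨fun α t => isUnit_of_forall_exists (b := b) fun v => ?_, fun t α β =>
      compat_of_forall_exists (fun w => ?_) α β⟩
    · obtain ⟨x, hx₀, hx⟩ := h (t + Pi.single α 1) v α
      exact ⟨x, hx₀, fun s hs => hx s (by rw [mem_singleton_iff.1 hs, add_sub_cancel_right])⟩
    · obtain ⟨x, hx₀, hx⟩ := h t w α
      exact ⟨x, hx₀, fun s hs => hx s ((cone_le t α).trans hs)⟩
  tfae_finish

/-- Theorem 6 of the paper.
For the linear recurrence `x (t + 1_α) = A α t *ᵥ x t + b α t` on `ℤ^m`, the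
following are equivalent:
(i) every matrix `A α t` is invertible and the two compatibility relations hold;
(ii) for every `(t₀, x₀)` and every `α₀` there exists at least one solution on
`{t : t₀ - 1_{α₀} ≤ t}` with `x t₀ = x₀`;
(iii) for every `(t₀, x₀)` and every `α₀` such a solution exists and is unique;
(iv) for all `t₁ ≤ t₀` and every `x₀` there is a unique solution on
`{t : t₁ ≤ t}` with `x t₀ = x₀`;
(v) for every `(t₀, x₀)` there is a unique solution on all of `ℤ^m` with
`x t₀ = x₀`. -/
theorem linear_multitime_recurrence_tfae
    {m n : ℕ} (hm : 1 ≤ m) (hn : 1 ≤ n) {K : Type*} [Field K]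
    (A : Fin m → (Fin m → ℤ) → Matrix (Fin n) (Fin n) K)
    (b : Fin m → (Fin m → ℤ) → (Fin n → K)) :
    List.TFAE [
      -- (i)
      (∀ (α : Fin m) (t : Fin m → ℤ), IsUnit (A α t)) ∧
        (∀ (t : Fin m → ℤ) (α β : Fin m),
          A α (t + Pi.single β 1) * A β t = A β (t + Pi.single α 1) * A α t ∧
          (A α (t + Pi.single β 1)).mulVec (b β t) + b α (t + Pi.single β 1)
            = (A β (t + Pi.single α 1)).mulVec (b α t) + b β (t + Pi.single α 1)),
      -- (ii)
      ∀ (t₀ : Fin m → ℤ) (x₀ : Fin n → K) (α₀ : Fin m),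
        ∃ x : (Fin m → ℤ) → (Fin n → K), x t₀ = x₀ ∧
          ∀ t : Fin m → ℤ, t₀ - Pi.single α₀ 1 ≤ t → ∀ α : Fin m,
            x (t + Pi.single α 1) = (A α t).mulVec (x t) + b α t,
      -- (iii)
      ∀ (t₀ : Fin m → ℤ) (x₀ : Fin n → K) (α₀ : Fin m),
        ∃ x : (Fin m → ℤ) → (Fin n → K),
          (x t₀ = x₀ ∧
            ∀ t : Fin m → ℤ, t₀ - Pi.single α₀ 1 ≤ t → ∀ α : Fin m,
              x (t + Pi.single α 1) = (A α t).mulVec (x t) + b α t) ∧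
          ∀ y : (Fin m → ℤ) → (Fin n → K),
            (y t₀ = x₀ ∧
              ∀ t : Fin m → ℤ, t₀ - Pi.single α₀ 1 ≤ t → ∀ α : Fin m,
                y (t + Pi.single α 1) = (A α t).mulVec (y t) + b α t) →
            ∀ t : Fin m → ℤ, t₀ - Pi.single α₀ 1 ≤ t → y t = x t,
      -- (iv)
      ∀ (t₀ t₁ : Fin m → ℤ), t₁ ≤ t₀ → ∀ x₀ : Fin n → K,
        ∃ x : (Fin m → ℤ) → (Fin n → K),
          (x t₀ = x₀ ∧
            ∀ t : Fin m → ℤ, t₁ ≤ t → ∀ α : Fin m,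
              x (t + Pi.single α 1) = (A α t).mulVec (x t) + b α t) ∧
          ∀ y : (Fin m → ℤ) → (Fin n → K),
            (y t₀ = x₀ ∧
              ∀ t : Fin m → ℤ, t₁ ≤ t → ∀ α : Fin m,
                y (t + Pi.single α 1) = (A α t).mulVec (y t) + b α t) →
            ∀ t : Fin m → ℤ, t₁ ≤ t → y t = x t,
      -- (v)
      ∀ (t₀ : Fin m → ℤ) (x₀ : Fin n → K),
        ∃! x : (Fin m → ℤ) → (Fin n → K), x t₀ = x₀ ∧
          ∀ (t : Fin m → ℤ) (α : Fin m),
            x (t + Pi.single α 1) = (A α t).mulVec (x t) + b α t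
    ] :=
  linear_multitime_recurrence_tfae_general A b
end

section
/- Let K be a field, n ≥ 1, m ≥ 1, and let Z be either ℤ^m or {t ∈ ℤ^m : t ≥ t₁} for some t₁ ∈ ℤ^m. Let A_α : Z → M_n(K) for α ∈ {1,…,m} satisfy A_α(t+1_β)A_β(t) = A_β(t+1_α)A_α(t) for all t ∈ Z and all α, β. Then for every t₀ ∈ Z and every X₀ ∈ M_n(K) there exists a unique matrix function X : {t ∈ Z : t ≥ t₀} → M_n(K) satisfying X(t+1_α) = A_α(t)X(t) for all t ≥ t₀ and all α ∈ {1,…,m}, with X(t₀) = X₀. -/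
/-!
Define `X t` for `t ≥ t₀` by stepping back along an arbitrary coordinate `γ` with `t₀ γ < t γ`:
`X t = A γ (t - 1_γ) * X (t - 1_γ)`, recursing on the lattice distance from `t₀`. If the step
back from `t + 1_α` goes along `γ ≠ α`, the recurrence at `t + 1_α` follows from the recurrence
at `t - 1_γ` in both directions `α` and `γ` (induction) together with the compatibility condition
on the unit square at `t - 1_γ`; so the arbitrary choice of `γ` does not matter. Uniqueness is
induction on the same distance.
-/

namespace MultitimeRecurrence

variable {ι M : Type*}

lemma eq_of_le_of_forall_not_lt {t₀ t : ι → ℤ} (ht : t₀ ≤ t) (h : ¬∃ γ, t₀ γ < t γ) :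
    t = t₀ :=
  funext fun i => le_antisymm (not_lt.mp fun hi => h ⟨i, hi⟩) (ht i)

def latticeDist [Fintype ι] (t₀ t : ι → ℤ) : ℕ := ∑ i, (t i - t₀ i).toNat

variable [DecidableEq ι]

lemma le_sub_single {t₀ t : ι → ℤ} {γ : ι} (ht : t₀ ≤ t) (hγ : t₀ γ < t γ) :
    t₀ ≤ t - Pi.single γ 1 := by
  intro i
  rcases eq_or_ne i γ with rfl | hi
  · simp only [Pi.sub_apply, Pi.single_eq_same]; omega
  · simpa [hi] using ht i

variable [Fintype ι]

lemma latticeDist_sub_single_lt {t₀ t : ι → ℤ} {γ : ι} (hγ : t₀ γ < t γ) :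
    latticeDist t₀ (t - Pi.single γ 1) < latticeDist t₀ t := by
  apply Finset.sum_lt_sum
  · intro i _
    rcases eq_or_ne i γ with rfl | hi
    · simp only [Pi.sub_apply, Pi.single_eq_same]; omega
    · simp [hi]
  · exact ⟨γ, Finset.mem_univ _, by simp only [Pi.sub_apply, Pi.single_eq_same]; omega⟩

variable [Monoid M]

noncomputable def solution (A : ι → (ι → ℤ) → M) (t₀ : ι → ℤ) (X₀ : M) (t : ι → ℤ) : M :=
  if h : ∃ γ, t₀ γ < t γ then
    A h.choose (t - Pi.single h.choose 1) * solution A t₀ X₀ (t - Pi.single h.choose 1)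
  else X₀
termination_by latticeDist t₀ t
decreasing_by exact latticeDist_sub_single_lt h.choose_spec

variable {A : ι → (ι → ℤ) → M} {t₀ : ι → ℤ} {X₀ : M}

lemma solution_self : solution A t₀ X₀ t₀ = X₀ := by
  rw [solution, dif_neg (by simp)]

theorem solution_add_single
    (hA : ∀ t, t₀ ≤ t → ∀ α β,
      A α (t + Pi.single β 1) * A β t = A β (t + Pi.single α 1) * A α t)
    (t : ι → ℤ) (ht : t₀ ≤ t) (α : ι) :
    solution A t₀ X₀ (t + Pi.single α 1) = A α t * solution A t₀ X₀ t := by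
  have hex : ∃ γ, t₀ γ < (t + Pi.single α 1 : ι → ℤ) γ :=
    ⟨α, by simp only [Pi.add_apply, Pi.single_eq_same]; linarith [ht α]⟩
  have hγ := hex.choose_spec
  rw [solution, dif_pos hex]
  generalize hex.choose = γ at hγ ⊢
  rcases eq_or_ne γ α with rfl | hγα
  · rw [add_sub_cancel_right]
  have hγ' : t₀ γ < t γ := by simpa [hγα] using hγ
  have ht' := le_sub_single ht hγ'
  calc A γ (t + Pi.single α 1 - Pi.single γ 1) *
          solution A t₀ X₀ (t + Pi.single α 1 - Pi.single γ 1)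
      = A γ (t - Pi.single γ 1 + Pi.single α 1) *
          solution A t₀ X₀ (t - Pi.single γ 1 + Pi.single α 1) := by
        rw [add_sub_right_comm]
    _ = A γ (t - Pi.single γ 1 + Pi.single α 1) *
          (A α (t - Pi.single γ 1) * solution A t₀ X₀ (t - Pi.single γ 1)) := by
        rw [solution_add_single hA _ ht' α]
    _ = A α (t - Pi.single γ 1 + Pi.single γ 1) *
          (A γ (t - Pi.single γ 1) * solution A t₀ X₀ (t - Pi.single γ 1)) := by
        rw [← mul_assoc, ← hA _ ht' α γ, mul_assoc]
    _ = A α t * solution A t₀ X₀ t := by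
        rw [← solution_add_single hA _ ht' γ, sub_add_cancel]
termination_by latticeDist t₀ t
decreasing_by all_goals exact latticeDist_sub_single_lt hγ'

theorem eq_solution {Y : (ι → ℤ) → M} (hY₀ : Y t₀ = X₀)
    (hY : ∀ t, t₀ ≤ t → ∀ α, Y (t + Pi.single α 1) = A α t * Y t)
    (t : ι → ℤ) (ht : t₀ ≤ t) : Y t = solution A t₀ X₀ t := by
  rw [solution]
  split_ifs with hex
  · have hγ := hex.choose_spec
    generalize hex.choose = γ at hγ ⊢
    have ht' := le_sub_single ht hγ
    conv_lhs => rw [← sub_add_cancel t (Pi.single γ 1)]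
    rw [hY _ ht' γ, eq_solution hY₀ hY _ ht']
  · rw [eq_of_le_of_forall_not_lt ht hex, hY₀]
termination_by latticeDist t₀ t
decreasing_by exact latticeDist_sub_single_lt hγ

end MultitimeRecurrence

open MultitimeRecurrence in
theorem matrix_multitime_recurrence_existence_uniqueness_general
    {m n : ℕ} {K : Type*} [Field K]
    (Z : Set (Fin m → ℤ))
    (hZ : Z = Set.univ ∨ ∃ t₁ : Fin m → ℤ, Z = {t | t₁ ≤ t})
    (A : Fin m → (Fin m → ℤ) → Matrix (Fin n) (Fin n) K)
    (hcompat : ∀ t ∈ Z, ∀ α β : Fin m,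
      A α (t + Pi.single β 1) * A β t = A β (t + Pi.single α 1) * A α t) :
    ∀ t₀ ∈ Z, ∀ X₀ : Matrix (Fin n) (Fin n) K,
      ∃ X : (Fin m → ℤ) → Matrix (Fin n) (Fin n) K,
        (X t₀ = X₀ ∧
          ∀ t ∈ Z, t₀ ≤ t → ∀ α : Fin m,
            X (t + Pi.single α 1) = A α t * X t) ∧
        ∀ Y : (Fin m → ℤ) → Matrix (Fin n) (Fin n) K,
          (Y t₀ = X₀ ∧
            ∀ t ∈ Z, t₀ ≤ t → ∀ α : Fin m,
              Y (t + Pi.single α 1) = A α t * Y t) →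
          ∀ t ∈ Z, t₀ ≤ t → Y t = X t := by
  intro t₀ ht₀ X₀
  have hZ : IsUpperSet Z := by
    rcases hZ with rfl | ⟨t₁, rfl⟩
    exacts [isUpperSet_univ, isUpperSet_Ici t₁]
  refine ⟨solution A t₀ X₀, ⟨solution_self, fun t _ ht α => ?_⟩, ?_⟩
  · exact solution_add_single (fun t ht => hcompat t (hZ ht ht₀)) t ht α
  · rintro Y ⟨hY₀, hY⟩ t _ ht
    exact eq_solution hY₀ (fun t ht => hY t (hZ ht ht₀) ht) t ht

/-- Proposition 3 of the paper.
If `A α (t+1_β) * A β t = A β (t+1_α) * A α t` for all `t ∈ Z` and all `α β`,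
then for every `t₀ ∈ Z` and every matrix `X₀` there is a unique matrix function
on `{t ∈ Z : t₀ ≤ t}` solving `X (t + 1_α) = A α t * X t` with `X t₀ = X₀`.
Here `Z` is either `ℤ^m` or an upper set `{t : t₁ ≤ t}`. -/
theorem matrix_multitime_recurrence_existence_uniqueness
    {m n : ℕ} (hm : 1 ≤ m) (hn : 1 ≤ n) {K : Type*} [Field K]
    (Z : Set (Fin m → ℤ))
    (hZ : Z = Set.univ ∨ ∃ t₁ : Fin m → ℤ, Z = {t | t₁ ≤ t})
    (A : Fin m → (Fin m → ℤ) → Matrix (Fin n) (Fin n) K)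
    (hcompat : ∀ t ∈ Z, ∀ α β : Fin m,
      A α (t + Pi.single β 1) * A β t = A β (t + Pi.single α 1) * A α t) :
    ∀ t₀ ∈ Z, ∀ X₀ : Matrix (Fin n) (Fin n) K,
      ∃ X : (Fin m → ℤ) → Matrix (Fin n) (Fin n) K,
        (X t₀ = X₀ ∧
          ∀ t ∈ Z, t₀ ≤ t → ∀ α : Fin m,
            X (t + Pi.single α 1) = A α t * X t) ∧
        ∀ Y : (Fin m → ℤ) → Matrix (Fin n) (Fin n) K,
          (Y t₀ = X₀ ∧
            ∀ t ∈ Z, t₀ ≤ t → ∀ α : Fin m,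
              Y (t + Pi.single α 1) = A α t * Y t) →
          ∀ t ∈ Z, t₀ ≤ t → Y t = X t :=
  matrix_multitime_recurrence_existence_uniqueness_general Z hZ A hcompat
end

section
/- Let K be a field, n ≥ 1, m ≥ 1, Z either ℤ^m or {t ∈ ℤ^m : t ≥ t₁}, and A_α : Z → M_n(K) with A_α(t+1_β)A_β(t) = A_β(t+1_α)A_α(t) for all t ∈ Z and all α, β. Then for all t, s ∈ Z with t ≥ s, the fundamental matrix factors as χ(t,s) = C_{1, t¹−s¹}(s¹,t²,…,t^m) · C_{2, t²−s²}(s¹,s²,t³,…,t^m) · … · C_{m−1, t^{m−1}−s^{m−1}}(s¹,…,s^{m−1},t^m) · C_{m, t^m−s^m}(s¹,s²,…,s^m). -/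
/-! Walk from `t` down to `s` one coordinate at a time, first coordinate first. The intermediate
points agree with `s` in the first `j` coordinates and with `t` in the others. Along the step in
coordinate `α` the recursion `χ(v + 1_α, s) = A_α(v) χ(v, s)` iterates to
`χ(u + k·1_α, s) = C_{α,k}(u) χ(u, s)`, so each step contributes one factor `C_{α, t^α - s^α}`. -/

/-- The matrix `C_{α,k}(t)`: the ordered product
`A α (t+(k-1)·1_α) · A α (t+(k-2)·1_α) · … · A α (t+1_α) · A α t`,
with `C_{α,0}(t) = 1`. -/
def Cmat {m n : ℕ} {K : Type*} [Field K]
    (A : Fin m → (Fin m → ℤ) → Matrix (Fin n) (Fin n) K) (α : Fin m) :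
    ℕ → (Fin m → ℤ) → Matrix (Fin n) (Fin n) K
  | 0, _ => 1
  | k + 1, t => A α (t + (k : ℤ) • Pi.single α 1) * Cmat A α k t

section

variable {m n : ℕ} {K : Type*} [Field K] (A : Fin m → (Fin m → ℤ) → Matrix (Fin n) (Fin n) K)

theorem le_add_natCast_smul_single (u : Fin m → ℤ) (α : Fin m) (k : ℕ) :
    u ≤ u + (k : ℤ) • Pi.single α 1 :=
  le_add_of_nonneg_right (smul_nonneg k.cast_nonneg (Pi.single_nonneg.mpr zero_le_one))

theorem apply_add_smul_single_eq_Cmat_mul (X : (Fin m → ℤ) → Matrix (Fin n) (Fin n) K)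
    (α : Fin m) (u : Fin m → ℤ) (hX : ∀ v, u ≤ v → X (v + Pi.single α 1) = A α v * X v) :
    ∀ k : ℕ, X (u + (k : ℤ) • Pi.single α 1) = Cmat A α k u * X u
  | 0 => by simp [Cmat]
  | k + 1 => by
    rw [Nat.cast_succ, add_smul, one_smul, ← add_assoc, hX _ (le_add_natCast_smul_single u α k),
      apply_add_smul_single_eq_Cmat_mul X α u hX k, Cmat, Matrix.mul_assoc]

end

def splice {m : ℕ} (s t : Fin m → ℤ) (j : ℕ) : Fin m → ℤ :=
  fun i => if (i : ℕ) < j then s i else t i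

section

variable {m : ℕ} (s t : Fin m → ℤ)

@[simp] theorem splice_zero : splice s t 0 = t := by
  funext i; simp [splice]

theorem splice_of_le {j : ℕ} (hj : m ≤ j) : splice s t j = s := by
  funext i; simp [splice, i.isLt.trans_le hj]

theorem le_splice {s t : Fin m → ℤ} (hst : s ≤ t) (j : ℕ) : s ≤ splice s t j := by
  intro i; unfold splice; split_ifs
  exacts [le_rfl, hst i]

theorem splice_succ_val (α : Fin m) :
    splice s t ((α : ℕ) + 1) = fun i => if i ≤ α then s i else t i := by
  funext i; simp only [splice, Nat.lt_succ_iff, Fin.le_iff_val_le_val]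

theorem splice_eq_splice_succ_add {s t : Fin m → ℤ} (hst : s ≤ t) (α : Fin m) :
    splice s t (α : ℕ) = splice s t ((α : ℕ) + 1) + ((t α - s α).toNat : ℤ) • Pi.single α 1 := by
  funext i
  rcases eq_or_ne i α with rfl | hne
  · simp [splice, Int.toNat_of_nonneg (sub_nonneg.mpr (hst i))]
  · have : (i : ℕ) < α + 1 ↔ (i : ℕ) < α := by have := Fin.val_ne_of_ne hne; omega
    simp only [splice, Pi.add_apply, Pi.smul_apply, Pi.single_eq_of_ne hne, smul_zero, add_zero,
      this]

end

theorem apply_splice_eq_prod_drop {m n : ℕ} {K : Type*} [Field K]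
    (A : Fin m → (Fin m → ℤ) → Matrix (Fin n) (Fin n) K)
    (X : (Fin m → ℤ) → Matrix (Fin n) (Fin n) K) {s t : Fin m → ℤ} (hst : s ≤ t)
    (hX : ∀ v, s ≤ v → ∀ α, X (v + Pi.single α 1) = A α v * X v) (hXs : X s = 1)
    {j : ℕ} (hj : j ≤ m) :
    X (splice s t j) = (((List.finRange m).map fun α =>
      Cmat A α (t α - s α).toNat (fun i => if i ≤ α then s i else t i)).drop j).prod := by
  induction hj using Nat.decreasingInduction with
  | self => simp [splice_of_le s t le_rfl, hXs, List.drop_eq_nil_of_le]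
  | of_succ j hj ih =>
    let α : Fin m := ⟨j, hj⟩
    rw [splice_eq_splice_succ_add hst α, apply_add_smul_single_eq_Cmat_mul A X α _
      (fun v hv => hX v ((le_splice hst _).trans hv) α), ih,
      List.drop_eq_getElem_cons (i := j) (by simpa using hj), List.prod_cons, splice_succ_val]
    simp [α]

theorem fundamental_matrix_factorization_general
    {m n : ℕ} {K : Type*} [Field K]
    (Z : Set (Fin m → ℤ))
    (hZ : Z = Set.univ ∨ ∃ t₁ : Fin m → ℤ, Z = {t | t₁ ≤ t})
    (A : Fin m → (Fin m → ℤ) → Matrix (Fin n) (Fin n) K)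
    (χ : (Fin m → ℤ) → (Fin m → ℤ) → Matrix (Fin n) (Fin n) K)
    (hχrec : ∀ s ∈ Z, ∀ t ∈ Z, s ≤ t → ∀ α : Fin m,
      χ (t + Pi.single α 1) s = A α t * χ t s)
    (hχinit : ∀ s ∈ Z, χ s s = 1) :
    ∀ s ∈ Z, ∀ t ∈ Z, s ≤ t →
      χ t s = (((List.finRange m).map (fun α : Fin m =>
        Cmat A α (t α - s α).toNat (fun i => if i ≤ α then s i else t i))).prod) := by
  intro s hs t _ hst
  have hZ_upper : IsUpperSet Z := by
    rcases hZ with rfl | ⟨t₁, rfl⟩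
    exacts [isUpperSet_univ, isUpperSet_Ici t₁]
  simpa using apply_splice_eq_prod_drop A (χ · s) hst
    (fun v hv => hχrec s hs v (hZ_upper hv hs) hv) (hχinit s hs) m.zero_le

/-- (Proposition 7 f) of the paper).
Assume `A α (t+1_β) * A β t = A β (t+1_α) * A α t` on `Z`, and let `χ` be the
fundamental matrix. Then for all `t, s ∈ Z` with `s ≤ t`,
`χ t s = C_{1,t¹-s¹}(s¹,t²,…,t^m) · C_{2,t²-s²}(s¹,s²,t³,…,t^m) · … ·
C_{m,t^m-s^m}(s¹,…,s^m)`, the product taken in increasing order of `α`, where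
the argument of `C_{α,·}` equals `s` in coordinates `≤ α` and `t` in
coordinates `> α`. Here `Z` is either `ℤ^m` or an upper set. -/
theorem fundamental_matrix_factorization
    {m n : ℕ} (hm : 1 ≤ m) (hn : 1 ≤ n) {K : Type*} [Field K]
    (Z : Set (Fin m → ℤ))
    (hZ : Z = Set.univ ∨ ∃ t₁ : Fin m → ℤ, Z = {t | t₁ ≤ t})
    (A : Fin m → (Fin m → ℤ) → Matrix (Fin n) (Fin n) K)
    (hcompat : ∀ t ∈ Z, ∀ α β : Fin m,
      A α (t + Pi.single β 1) * A β t = A β (t + Pi.single α 1) * A α t)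
    (χ : (Fin m → ℤ) → (Fin m → ℤ) → Matrix (Fin n) (Fin n) K)
    (hχrec : ∀ s ∈ Z, ∀ t ∈ Z, s ≤ t → ∀ α : Fin m,
      χ (t + Pi.single α 1) s = A α t * χ t s)
    (hχinit : ∀ s ∈ Z, χ s s = 1) :
    ∀ s ∈ Z, ∀ t ∈ Z, s ≤ t →
      χ t s = (((List.finRange m).map (fun α : Fin m =>
        Cmat A α (t α - s α).toNat (fun i => if i ≤ α then s i else t i))).prod) :=
  fundamental_matrix_factorization_general Z hZ A χ hχrec hχinit
end

section
/- Let K be a field, n ≥ 1, m ≥ 1, Z either ℤ^m or {t ∈ ℤ^m : t ≥ t₁}, and A_α : Z → M_n(K) with A_α(t+1_β)A_β(t) = A_β(t+1_α)A_α(t) for all t ∈ Z and all α, β. Then: the fundamental matrix χ(t,s) is invertible for all t, s ∈ Z with t ≥ s if and only if A_α(t) is invertible for every α ∈ {1,…,m} and every t ∈ Z. Moreover, if every A_α(t) is invertible, then χ(t,s) = χ(t,t₀)·χ(s,t₀)^{−1} for all t, s, t₀ ∈ Z with t ≥ s ≥ t₀. -/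
/-- Descent induction principle on `ℤ^m` above a base point `s`. -/
lemma int_pi_induction {m : ℕ} (s : Fin m → ℤ) (P : (Fin m → ℤ) → Prop)
    (h0 : P s)
    (hstep : ∀ t, s ≤ t → P t → ∀ α, P (t + Pi.single α 1)) :
    ∀ t, s ≤ t → P t := by
  have main : ∀ N : ℕ, ∀ t, s ≤ t → (∑ i, (t i - s i).toNat) ≤ N → P t := by
    intro N
    induction N with
    | zero =>
      intro t hst hN
      have ht : t = s := by
        funext i
        have h1 : (t i - s i).toNat = 0 :=
          Finset.sum_eq_zero_iff.mp (Nat.le_zero.mp hN) i (Finset.mem_univ i)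
        have h2 : t i - s i ≤ 0 := Int.toNat_eq_zero.mp h1
        have h3 : s i ≤ t i := hst i
        omega
      rw [ht]; exact h0
    | succ N ih =>
      intro t hst hN
      by_cases hts : t = s
      · rw [hts]; exact h0
      · obtain ⟨α, hα⟩ : ∃ α, s α < t α := by
          by_contra h
          push_neg at h
          exact hts (le_antisymm (fun i => h i) hst)
        obtain ⟨t', htα, htβ⟩ :
            ∃ t' : Fin m → ℤ, t' α = t α - 1 ∧ ∀ i, i ≠ α → t' i = t i :=
          ⟨t - Pi.single α 1, by simp, fun i hi => by simp [Pi.single_apply, hi]⟩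
        have htt' : t = t' + Pi.single α 1 := by
          funext i
          by_cases hi : i = α
          · rw [hi, Pi.add_apply, htα, Pi.single_apply]; simp
          · simp [htβ i hi, Pi.single_apply, hi]
        have hst' : s ≤ t' := by
          rw [Pi.le_def]
          intro i
          by_cases hi : i = α
          · rw [hi, htα]; omega
          · rw [htβ i hi]; exact Pi.le_def.mp hst i
        have hsum : (∑ i, (t' i - s i).toNat) ≤ N := by
          have hlt : (∑ i, (t' i - s i).toNat) < ∑ i, (t i - s i).toNat := by
            apply Finset.sum_lt_sum
            · intro i _
              apply Int.toNat_le_toNat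
              by_cases hi : i = α
              · rw [hi, htα]; omega
              · rw [htβ i hi]
            · refine ⟨α, Finset.mem_univ α, ?_⟩
              have h1 : t' α - s α = t α - s α - 1 := by rw [htα]; ring
              have h2 : 0 < t α - s α := by omega
              omega
          omega
        rw [htt']
        exact hstep t' hst' (ih t' hst' hsum) α
  exact fun t hst => main _ t hst le_rfl

/-- (Proposition 7 g), i) of the paper).
Assume `A α (t+1_β) * A β t = A β (t+1_α) * A α t` on `Z`, and let `χ` be the
fundamental matrix. Then `χ t s` is invertible for all `t ≥ s` in `Z` if and
only if `A α t` is invertible for every `α` and every `t ∈ Z`. Moreover, if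
every `A α t` is invertible, then `χ t s = χ t t₀ * (χ s t₀)⁻¹` for all
`t ≥ s ≥ t₀` in `Z`. Here `Z` is either `ℤ^m` or an upper set. -/
theorem fundamental_matrix_invertibility
    {m n : ℕ} (hm : 1 ≤ m) (hn : 1 ≤ n) {K : Type*} [Field K]
    (Z : Set (Fin m → ℤ))
    (hZ : Z = Set.univ ∨ ∃ t₁ : Fin m → ℤ, Z = {t | t₁ ≤ t})
    (A : Fin m → (Fin m → ℤ) → Matrix (Fin n) (Fin n) K)
    (hcompat : ∀ t ∈ Z, ∀ α β : Fin m,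
      A α (t + Pi.single β 1) * A β t = A β (t + Pi.single α 1) * A α t)
    (χ : (Fin m → ℤ) → (Fin m → ℤ) → Matrix (Fin n) (Fin n) K)
    (hχrec : ∀ s ∈ Z, ∀ t ∈ Z, s ≤ t → ∀ α : Fin m,
      χ (t + Pi.single α 1) s = A α t * χ t s)
    (hχinit : ∀ s ∈ Z, χ s s = 1) :
    ((∀ s ∈ Z, ∀ t ∈ Z, s ≤ t → IsUnit (χ t s)) ↔
      (∀ (α : Fin m), ∀ t ∈ Z, IsUnit (A α t))) ∧
    ((∀ (α : Fin m), ∀ t ∈ Z, IsUnit (A α t)) →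
      ∀ t₀ ∈ Z, ∀ s ∈ Z, ∀ t ∈ Z, t₀ ≤ s → s ≤ t →
        χ t s = χ t t₀ * (χ s t₀)⁻¹) := by
  have hup : ∀ s ∈ Z, ∀ t : Fin m → ℤ, s ≤ t → t ∈ Z := by
    rcases hZ with h | ⟨t₁, h⟩ <;> subst h
    · intro s _ t _; trivial
    · intro s hs t hst; exact le_trans hs hst
  have hle1 : ∀ (t : Fin m → ℤ) (α : Fin m), t ≤ t + Pi.single α 1 := by
    intro t α i
    by_cases hi : i = α
    · subst hi; simp
    · simp [Pi.single_apply, hi]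
  -- all A unit → χ unit
  have hAχ : (∀ (α : Fin m), ∀ t ∈ Z, IsUnit (A α t)) →
      ∀ s ∈ Z, ∀ t ∈ Z, s ≤ t → IsUnit (χ t s) := by
    intro hA s hs t ht hst
    refine int_pi_induction s (fun u => IsUnit (χ u s)) ?_ ?_ t hst
    · show IsUnit (χ s s)
      rw [hχinit s hs]; exact isUnit_one
    · intro u hsu hu α
      rw [hχrec s hs u (hup s hs u hsu) hsu α]
      exact (hA α u (hup s hs u hsu)).mul hu
  constructor
  · constructor
    · intro hχ α t ht
      have h1 := hχrec t ht t ht le_rfl α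
      rw [hχinit t ht, mul_one] at h1
      have h2 := hχ t ht _ (hup t ht _ (hle1 t α)) (hle1 t α)
      rwa [h1] at h2
    · exact hAχ
  · intro hA t₀ ht₀ s hs t ht hts hst
    have key : χ t t₀ = χ t s * χ s t₀ := by
      refine int_pi_induction s (fun u => χ u t₀ = χ u s * χ s t₀) ?_ ?_ t hst
      · show χ s t₀ = χ s s * χ s t₀
        rw [hχinit s hs, one_mul]
      · intro u hsu hind α
        have huZ : u ∈ Z := hup s hs u hsu
        rw [hχrec t₀ ht₀ u huZ (le_trans hts hsu) α,
            hχrec s hs u huZ hsu α, hind, mul_assoc]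
    have hu : IsUnit (χ s t₀) := hAχ hA t₀ ht₀ s hs hts
    rw [key, mul_assoc,
        Matrix.mul_nonsing_inv _ ((Matrix.isUnit_iff_isUnit_det _).mp hu), mul_one]
end

section
/- Let K be a field, n ≥ 1, m ≥ 1, Z either ℤ^m or {t ∈ ℤ^m : t ≥ t₁}, and A_α : Z → M_n(K) with A_α(t+1_β)A_β(t) = A_β(t+1_α)A_α(t) for all t ∈ Z and all α, β. Let (t₀,x₀) ∈ Z × K^n. Then the unique function x : {t ∈ Z : t ≥ t₀} → K^n with x(t+1_α) = A_α(t)x(t) for all t ≥ t₀ and all α, and x(t₀) = x₀, is given by x(t) = χ(t,t₀)·x₀ for all t ≥ t₀. In particular, if all A_α are constant matrices, then x(t) = A₁^{t¹−t₀¹}·A₂^{t²−t₀²}·…·A_m^{t^m−t₀^m}·x₀ for all t ≥ t₀. -/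
lemma ge_induction {m : ℕ} (t₀ : Fin m → ℤ) (P : (Fin m → ℤ) → Prop)
    (h0 : P t₀)
    (hs : ∀ t, t₀ ≤ t → P t → ∀ α, P (t + Pi.single α 1)) :
    ∀ t, t₀ ≤ t → P t := by
  have key : ∀ N : ℕ, ∀ t, t₀ ≤ t → (∑ β, (t β - t₀ β).toNat) ≤ N → P t := by
    intro N
    induction N with
    | zero =>
      intro t ht hsum
      have : t = t₀ := by
        funext β
        have h1 : (t β - t₀ β).toNat ≤ ∑ β, (t β - t₀ β).toNat :=
          Finset.single_le_sum (f := fun i => (t i - t₀ i).toNat)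
            (fun i _ => Nat.zero_le _) (Finset.mem_univ β)
        have h2 : t₀ β ≤ t β := ht β
        omega
      rw [this]; exact h0
    | succ N ih =>
      intro t ht hsum
      by_cases hteq : t = t₀
      · rw [hteq]; exact h0
      · have hex : ∃ α, t₀ α < t α := by
          by_contra h
          push_neg at h
          exact hteq (funext fun β => le_antisymm (h β) (ht β))
        obtain ⟨α, hα⟩ := hex
        obtain ⟨s, hsdef⟩ : ∃ s, s = t - Pi.single α 1 := ⟨_, rfl⟩
        have hsapp : ∀ β, s β = t β - (if β = α then 1 else 0) := by
          intro β; simp [hsdef, Pi.single_apply]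
        have hts : t = s + Pi.single α 1 := by
          funext β
          simp only [Pi.add_apply, Pi.single_apply, hsapp β]
          split <;> ring
        have hles : t₀ ≤ s := by
          intro β
          show t₀ β ≤ s β
          rw [hsapp β]
          rcases eq_or_ne β α with rfl | h
          · rw [if_pos rfl]; omega
          · rw [if_neg h]; have h2 : t₀ β ≤ t β := ht β; omega
        have hsum' : (∑ β, (s β - t₀ β).toNat) < ∑ β, (t β - t₀ β).toNat := by
          apply Finset.sum_lt_sum
          · intro β _
            rcases eq_or_ne β α with rfl | h
            · rw [hsapp β, if_pos rfl]; omega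
            · rw [hsapp β, if_neg h]; omega
          · refine ⟨α, Finset.mem_univ α, ?_⟩
            rw [hsapp α, if_pos rfl]
            omega
        have hPs : P s := ih s hles (by omega)
        rw [hts]
        exact hs s hles hPs α
  intro t ht
  exact key _ t ht le_rfl

lemma prod_pow_succ_comm {M : Type*} [Monoid M] {k : ℕ} (f : Fin k → M)
    (hcomm : ∀ a b, Commute (f a) (f b)) (α : Fin k) :
    ∀ (L : List (Fin k)), L.Nodup → α ∈ L → ∀ e : Fin k → ℕ,
      (L.map fun β => f β ^ (if β = α then e β + 1 else e β)).prod
        = f α * (L.map fun β => f β ^ e β).prod := by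
  intro L
  induction L with
  | nil => intro _ h; cases h
  | cons b L ih =>
    intro hnd hmem e
    simp only [List.map_cons, List.prod_cons]
    rcases List.mem_cons.mp hmem with hb | hb
    · subst hb
      have hα : α ∉ L := (List.nodup_cons.mp hnd).1
      have hmap : (L.map fun β => f β ^ (if β = α then e β + 1 else e β))
          = L.map fun β => f β ^ e β := by
        apply List.map_congr_left
        intro a ha
        have : a ≠ α := fun h => hα (h ▸ ha)
        rw [if_neg this]
      rw [if_pos rfl, hmap, pow_succ', mul_assoc]
    · have hbα : b ≠ α := by rintro rfl; exact (List.nodup_cons.mp hnd).1 hb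
      rw [if_neg hbα, ih (List.nodup_cons.mp hnd).2 hb e, ← mul_assoc,
        ← ((hcomm α b).pow_right (e b)).eq, mul_assoc]

/-- Proposition 8 of the paper.
Assume `A α (t+1_β) * A β t = A β (t+1_α) * A α t` on `Z`, and let `χ (·) t₀`
be the fundamental matrix solution at `t₀ ∈ Z`. Then the unique solution of
`x (t + 1_α) = A α t *ᵥ x t` on `{t ∈ Z : t₀ ≤ t}` with `x t₀ = x₀`
is `x t = χ t t₀ *ᵥ x₀`: a function `x` is such a solution iff it agrees with
`χ (·) t₀ *ᵥ x₀` on `{t ∈ Z : t₀ ≤ t}`. In particular, if all the `A α` are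
constant then the solution is
`x t = A₁^{t¹-t₀¹} · … · A_m^{t^m-t₀^m} *ᵥ x₀`.
Here `Z` is either `ℤ^m` or an upper set. -/
theorem homogeneous_solution_via_fundamental_matrix
    {m n : ℕ} (hm : 1 ≤ m) (hn : 1 ≤ n) {K : Type*} [Field K]
    (Z : Set (Fin m → ℤ))
    (hZ : Z = Set.univ ∨ ∃ t₁ : Fin m → ℤ, Z = {t | t₁ ≤ t})
    (A : Fin m → (Fin m → ℤ) → Matrix (Fin n) (Fin n) K)
    (hcompat : ∀ t ∈ Z, ∀ α β : Fin m,
      A α (t + Pi.single β 1) * A β t = A β (t + Pi.single α 1) * A α t)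
    (χ : (Fin m → ℤ) → (Fin m → ℤ) → Matrix (Fin n) (Fin n) K)
    (hχrec : ∀ s ∈ Z, ∀ t ∈ Z, s ≤ t → ∀ α : Fin m,
      χ (t + Pi.single α 1) s = A α t * χ t s)
    (hχinit : ∀ s ∈ Z, χ s s = 1)
    (t₀ : Fin m → ℤ) (ht₀ : t₀ ∈ Z) (x₀ : Fin n → K) :
    (∀ x : (Fin m → ℤ) → (Fin n → K),
      (x t₀ = x₀ ∧
        ∀ t ∈ Z, t₀ ≤ t → ∀ α : Fin m,
          x (t + Pi.single α 1) = (A α t).mulVec (x t)) ↔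
      (∀ t ∈ Z, t₀ ≤ t → x t = (χ t t₀).mulVec x₀)) ∧
    ((∀ (α : Fin m) (t s : Fin m → ℤ), A α t = A α s) →
      ∀ x : (Fin m → ℤ) → (Fin n → K),
        (x t₀ = x₀ ∧
          ∀ t ∈ Z, t₀ ≤ t → ∀ α : Fin m,
            x (t + Pi.single α 1) = (A α t).mulVec (x t)) →
        ∀ t ∈ Z, t₀ ≤ t →
          x t = (((List.finRange m).map
            (fun α : Fin m => A α t₀ ^ (t α - t₀ α).toNat)).prod).mulVec x₀) := by
  -- every point above t₀ is in Z
  have hZmem : ∀ s : Fin m → ℤ, t₀ ≤ s → s ∈ Z := by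
    intro s hles
    rcases hZ with rfl | ⟨t₁, rfl⟩
    · trivial
    · exact le_trans ht₀ hles
  have hsingle_le : ∀ (t : Fin m → ℤ) (α : Fin m), t ≤ t + Pi.single α 1 := by
    intro t α
    have h01 : (0 : Fin m → ℤ) ≤ Pi.single α 1 := by
      intro β
      rcases eq_or_ne β α with rfl | h
      · simp
      · simp [Pi.single_apply, h]
    exact le_add_of_nonneg_right h01
  constructor
  · intro x
    constructor
    · rintro ⟨hinit, hrec⟩
      have : ∀ t, t₀ ≤ t → x t = (χ t t₀).mulVec x₀ := by
        apply ge_induction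
        · rw [hinit, hχinit t₀ ht₀, Matrix.one_mulVec]
        · intro t ht hP α
          rw [hrec t (hZmem t ht) ht α, hP,
            hχrec t₀ ht₀ t (hZmem t ht) ht α, Matrix.mulVec_mulVec]
      exact fun t _ ht => this t ht
    · intro h
      constructor
      · rw [h t₀ ht₀ le_rfl, hχinit t₀ ht₀, Matrix.one_mulVec]
      · intro t htZ ht α
        have ht' : t₀ ≤ t + Pi.single α 1 := le_trans ht (hsingle_le t α)
        rw [h t htZ ht, h (t + Pi.single α 1) (hZmem _ ht') ht',
          hχrec t₀ ht₀ t (hZmem t ht) ht α, Matrix.mulVec_mulVec]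
  · intro hconst x ⟨hinit, hrec⟩
    have hcomm : ∀ a b : Fin m, Commute (A a t₀) (A b t₀) := by
      intro a b
      have := hcompat t₀ ht₀ a b
      rwa [hconst a (t₀ + Pi.single b 1) t₀, hconst b (t₀ + Pi.single a 1) t₀] at this
    have main : ∀ t, t₀ ≤ t →
        x t = (((List.finRange m).map
          (fun α : Fin m => A α t₀ ^ (t α - t₀ α).toNat)).prod).mulVec x₀ := by
      apply ge_induction
      · have : ((List.finRange m).map
            (fun α : Fin m => A α t₀ ^ (t₀ α - t₀ α).toNat)).prod = 1 := by
          rw [List.prod_eq_one]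
          intro y hy
          simp only [List.mem_map] at hy
          obtain ⟨α, _, rfl⟩ := hy
          simp
        rw [hinit, this, Matrix.one_mulVec]
      · intro t ht hP α
        obtain ⟨t', ht'⟩ : ∃ t', t' = t + Pi.single α 1 := ⟨_, rfl⟩
        have key : ((List.finRange m).map
            (fun β : Fin m => A β t₀ ^ (t' β - t₀ β).toNat)).prod
            = A α t₀ * ((List.finRange m).map
              (fun β : Fin m => A β t₀ ^ (t β - t₀ β).toNat)).prod := by
          have hmap : ((List.finRange m).map
              (fun β : Fin m => A β t₀ ^ (t' β - t₀ β).toNat))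
              = ((List.finRange m).map
              (fun β : Fin m => A β t₀ ^
                (if β = α then (t β - t₀ β).toNat + 1 else (t β - t₀ β).toNat))) := by
            apply List.map_congr_left
            intro β _
            have h2 : t₀ β ≤ t β := ht β
            rcases eq_or_ne β α with rfl | h
            · rw [if_pos rfl]
              have hβ2 : t' β = t β + 1 := by rw [ht']; simp
              rw [hβ2]; congr 1; omega
            · rw [if_neg h]
              have hβ2 : t' β = t β := by rw [ht']; simp [Pi.single_apply, h]
              rw [hβ2]
          rw [hmap, prod_pow_succ_comm (fun β => A β t₀) hcomm α (List.finRange m)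
            (List.nodup_finRange m) (List.mem_finRange α)]
        rw [← ht', key, ht', hrec t (hZmem t ht) ht α, hP, hconst α t t₀,
          Matrix.mulVec_mulVec]
    exact fun t _ ht => main t ht
end

section
/- Let K be a field, n ≥ 1, m ≥ 2, and A_α ∈ M_n(K), b_α ∈ K^n for α ∈ {1,…,m} with A_α A_β = A_β A_α and (I_n − A_α)b_β = (I_n − A_β)b_α for all α, β ∈ {1,…,m}. Let (t₀,x₀) ∈ ℤ^m × K^n. Then the unique solution x : {t ∈ ℤ^m : t ≥ t₀} → K^n of x(t+1_α) = A_α x(t) + b_α (for all t ≥ t₀ and all α) with x(t₀) = x₀ is x(t) = (Π_{α=1}^{m} A_α^{t^α − t₀^α}) x₀ + S(t¹−t₀¹; A₁) b₁ + Σ_{β=2}^{m} (Π_{α=1}^{β−1} A_α^{t^α − t₀^α}) · S(t^β − t₀^β; A_β) b_β for all t ≥ t₀, where S(k;A) = I_n + A + … + A^{k−1} for k ≥ 1 and S(0;A) = 0. -/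
/-- The geometric sum `S(k; A) = 1 + A + … + A^(k-1)`, with `S(0; A) = 0`. -/
def Sgeom {n : ℕ} {K : Type*} [Field K]
    (k : ℕ) (A : Matrix (Fin n) (Fin n) K) : Matrix (Fin n) (Fin n) K :=
  ∑ i ∈ Finset.range k, A ^ i

/-!
The maps `T_α v = A_α v + b_α` commute pairwise: `T_α ∘ T_β = T_β ∘ T_α` is exactly the pair of
conditions `A_α A_β = A_β A_α` and `(1 - A_α) b_β = (1 - A_β) b_α`. A solution must therefore be
`x t = T_1^{s_1} ∘ ⋯ ∘ T_m^{s_m} x₀` with `s = t - t₀`, since by commutativity incrementing `s_α`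
amounts to applying `T_α` once more; uniqueness is induction over the orthant `t₀ ≤ t`. Expanding
`T_α^k v = A_α^k v + S(k; A_α) b_α` through the composition gives the closed formula.
-/

open Matrix

theorem Pi.induction_add_single {ι : Type*} [Finite ι] [DecidableEq ι] {p : (ι → ℕ) → Prop}
    (zero : p 0) (add_single : ∀ s i, p s → p (s + Pi.single i 1)) (s : ι → ℕ) : p s := by
  induction s using WellFoundedLT.induction with
  | _ s ih =>
    obtain rfl | hs := eq_or_ne s 0
    · exact zero
    obtain ⟨i, hi⟩ := Function.ne_iff.mp hs
    rw [Pi.zero_apply] at hi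
    have hsplit : s - Pi.single i 1 + Pi.single i 1 = s := by
      ext j; obtain rfl | hj := eq_or_ne j i <;> simp [*]; omega
    rw [← hsplit]
    exact add_single _ _ (ih _ (Pi.lt_def.2 ⟨fun j => Nat.sub_le _ _, i, by simp; omega⟩))

theorem Int.pi_le_induction {ι : Type*} [Finite ι] [DecidableEq ι] {t₀ : ι → ℤ}
    {p : (ι → ℤ) → Prop} (base : p t₀)
    (add_single : ∀ t, t₀ ≤ t → ∀ i, p t → p (t + Pi.single i 1)) (t : ι → ℤ) (ht : t₀ ≤ t) :
    p t := by
  have key : ∀ s : ι → ℕ, p (t₀ + fun i => (s i : ℤ)) := by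
    refine Pi.induction_add_single ?_ fun s i hs => ?_
    · convert base; ext; simp
    convert add_single _ (le_add_of_nonneg_right fun j => by positivity) i hs using 1
    ext j; obtain rfl | hj := eq_or_ne j i <;> simp [*]; ring
  convert key fun i => (t i - t₀ i).toNat
  ext i
  rw [Pi.add_apply, Int.toNat_of_nonneg (sub_nonneg.2 (ht i)), add_sub_cancel]

theorem orthant_recurrence_iff {ι V : Type*} [Finite ι] [DecidableEq ι] (T : ι → V → V)
    (t₀ : ι → ℤ) (x₀ : V) {F : (ι → ℤ) → V} (hF₀ : F t₀ = x₀)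
    (hF : ∀ t, t₀ ≤ t → ∀ i, F (t + Pi.single i 1) = T i (F t)) (x : (ι → ℤ) → V) :
    (x t₀ = x₀ ∧ ∀ t, t₀ ≤ t → ∀ i, x (t + Pi.single i 1) = T i (x t)) ↔
      ∀ t, t₀ ≤ t → x t = F t := by
  have hle : ∀ t, t₀ ≤ t → ∀ i, t₀ ≤ t + Pi.single i 1 := fun t ht i =>
    ht.trans (le_add_of_nonneg_right (Pi.single_nonneg.2 zero_le_one))
  constructor
  · rintro ⟨hx₀, hx⟩
    refine Int.pi_le_induction (hx₀.trans hF₀.symm) fun t ht i h => ?_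
    rw [hx t ht i, hF t ht i, h]
  · intro hx
    refine ⟨(hx t₀ le_rfl).trans hF₀, fun t ht i => ?_⟩
    rw [hx _ (hle t ht i), hx t ht, hF t ht i]

theorem Int.toNat_sub_add_single {ι : Type*} [DecidableEq ι] {t₀ t : ι → ℤ} (ht : t₀ ≤ t)
    (i : ι) :
    (fun j => ((t + Pi.single i 1 : ι → ℤ) j - t₀ j).toNat)
      = (fun j => (t j - t₀ j).toNat) + Pi.single i 1 := by
  ext j
  have : t₀ j ≤ t j := ht j
  simp only [Pi.add_apply, Pi.single_apply]
  split_ifs <;> omega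

def finPowProd {M : Type*} [Monoid M] {m : ℕ} (f : Fin m → M) (s : Fin m → ℕ) : M :=
  ((List.finRange m).map fun i => f i ^ s i).prod

section PowProd

variable {M : Type*} [Monoid M]

theorem List.prod_map_pow_add_single {ι : Type*} [DecidableEq ι] {f : ι → M}
    (hf : ∀ i j, Commute (f i) (f j)) (s : ι → ℕ) {l : List ι} (hl : l.Nodup) {i : ι}
    (hi : i ∈ l) :
    (l.map fun j => f j ^ (s + Pi.single i 1 : ι → ℕ) j).prod
      = f i * (l.map fun j => f j ^ s j).prod := by
  induction l with
  | nil => simp at hi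
  | cons a l ih =>
    obtain ⟨ha, hl⟩ := List.nodup_cons.mp hl
    simp only [List.map_cons, List.prod_cons]
    obtain rfl | hi := List.mem_cons.mp hi
    · have hrest : (l.map fun j => f j ^ (s + Pi.single i 1 : ι → ℕ) j)
          = l.map fun j => f j ^ s j :=
        List.map_congr_left fun j hj => by
          rw [Pi.add_apply, Pi.single_eq_of_ne (ne_of_mem_of_not_mem hj ha), add_zero]
      rw [hrest, Pi.add_apply, Pi.single_eq_same, pow_succ', mul_assoc]
    · have hai : a ≠ i := fun h => ha (h ▸ hi)
      rw [ih hl hi, Pi.add_apply, Pi.single_eq_of_ne hai, add_zero,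
        ((hf a i).pow_left _).left_comm]

variable {m : ℕ}

theorem finPowProd_zero (f : Fin m → M) : finPowProd f 0 = 1 := by
  simp [finPowProd]

theorem finPowProd_add_single {f : Fin m → M} (hf : ∀ i j, Commute (f i) (f j))
    (s : Fin m → ℕ) (i : Fin m) :
    finPowProd f (s + Pi.single i 1) = f i * finPowProd f s :=
  List.prod_map_pow_add_single hf s (List.nodup_finRange m) (List.mem_finRange i)

theorem finPowProd_succ (f : Fin (m + 1) → M) (s : Fin (m + 1) → ℕ) :
    finPowProd f s = f 0 ^ s 0 * finPowProd (fun i => f i.succ) (fun i => s i.succ) := by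
  simp [finPowProd, List.finRange_succ, Function.comp_def]

end PowProd

theorem List.filter_finRange_lt_succ {m : ℕ} (β : Fin m) :
    (List.finRange (m + 1)).filter (fun α => α < β.succ)
      = 0 :: ((List.finRange m).filter (fun α => α < β)).map Fin.succ := by
  simp [List.finRange_succ, List.filter_map, Function.comp_def, Fin.succ_pos]

section AffineStep

variable {ι R : Type*} [Fintype ι]

def affineStep [NonUnitalNonAssocSemiring R] (A : Matrix ι ι R) (b : ι → R) :
    Function.End (ι → R) :=
  fun v => A *ᵥ v + b

theorem affineStep_smul [NonUnitalNonAssocSemiring R] (A : Matrix ι ι R) (b v : ι → R) :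
    affineStep A b • v = A *ᵥ v + b := rfl

theorem affineStep_commute [Ring R] [DecidableEq ι] {A A' : Matrix ι ι R} {b b' : ι → R}
    (hA : A * A' = A' * A) (hb : (1 - A) *ᵥ b' = (1 - A') *ᵥ b) :
    Commute (affineStep A b) (affineStep A' b') := by
  have hb : A *ᵥ b' + b = A' *ᵥ b + b' := by
    simp only [sub_mulVec, one_mulVec] at hb
    linear_combination (norm := module) -hb
  refine funext fun v => ?_
  change affineStep A b • affineStep A' b' • v = affineStep A' b' • affineStep A b • v
  simp only [affineStep_smul, mulVec_add, mulVec_mulVec, hA]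
  rw [add_assoc, hb, add_assoc]

end AffineStep

section Field

variable {n : ℕ} {K : Type*} [Field K]

theorem Sgeom_succ (k : ℕ) (A : Matrix (Fin n) (Fin n) K) :
    Sgeom (k + 1) A = A * Sgeom k A + 1 :=
  geom_sum_succ

theorem affineStep_pow_smul (A : Matrix (Fin n) (Fin n) K) (b : Fin n → K) (k : ℕ)
    (v : Fin n → K) :
    affineStep A b ^ k • v = A ^ k *ᵥ v + Sgeom k A *ᵥ b := by
  induction k with
  | zero => simp [Sgeom]
  | succ k ih =>
    rw [pow_succ', mul_smul, ih, affineStep_smul, Sgeom_succ, pow_succ',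
      mulVec_add, mulVec_mulVec, mulVec_mulVec, add_mulVec, one_mulVec, add_assoc]

theorem finPowProd_affineStep_smul {m : ℕ} (A : Fin m → Matrix (Fin n) (Fin n) K)
    (b : Fin m → Fin n → K) (s : Fin m → ℕ) (v : Fin n → K) :
    finPowProd (fun α => affineStep (A α) (b α)) s • v = finPowProd A s *ᵥ v +
      ∑ β, ((((List.finRange m).filter (fun α => α < β)).map fun α => A α ^ s α).prod
        * Sgeom (s β) (A β)) *ᵥ b β := by
  induction m with
  | zero => simp [finPowProd]
  | succ m ih =>
    rw [finPowProd_succ, mul_smul, ih, affineStep_pow_smul, finPowProd_succ, Fin.sum_univ_succ]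
    simp only [List.filter_finRange_lt_succ, List.map_cons, List.prod_cons, List.map_map,
      Fin.not_lt_zero, decide_false, List.filter_false, List.map_nil, List.prod_nil, one_mul,
      mulVec_add, Matrix.mulVec_sum, mulVec_mulVec, mul_assoc, Function.comp_def]
    abel

theorem finPowProd_affineStep_smul_eq {m : ℕ} (h0 : 0 < m)
    (A : Fin m → Matrix (Fin n) (Fin n) K) (b : Fin m → Fin n → K) (s : Fin m → ℕ)
    (v : Fin n → K) :
    finPowProd (fun α => affineStep (A α) (b α)) s • v =
      finPowProd A s *ᵥ v + Sgeom (s ⟨0, h0⟩) (A ⟨0, h0⟩) *ᵥ b ⟨0, h0⟩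
        + ∑ β ∈ Finset.univ.filter (fun β : Fin m => β ≠ ⟨0, h0⟩),
          ((((List.finRange m).filter (fun α => α < β)).map fun α => A α ^ s α).prod
            * Sgeom (s β) (A β)) *ᵥ b β := by
  have hnil : (List.finRange m).filter (fun α => α < ⟨0, h0⟩) = [] :=
    List.filter_eq_nil_iff.2 fun α _ => by
      rw [decide_eq_true_eq, Fin.lt_def]; exact Nat.not_lt_zero _
  rw [finPowProd_affineStep_smul, Finset.filter_ne', add_assoc,
    ← Finset.add_sum_erase _ _ (Finset.mem_univ ⟨0, h0⟩), hnil, List.map_nil, List.prod_nil,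
    one_mul]

end Field

/-- Theorem 11 of the paper, case `m ≥ 2`.
Let `A α` be pairwise commuting matrices and `b α` vectors with
`(1 - A α) *ᵥ b β = (1 - A β) *ᵥ b α`. Then the unique solution of the affine
recurrence `x (t + 1_α) = A α *ᵥ x t + b α` on `{t : t₀ ≤ t}` with
`x t₀ = x₀` is
`x t = (∏_{α=1}^m A_α^{t^α-t₀^α}) *ᵥ x₀ + S(t¹-t₀¹; A₁) *ᵥ b₁ +
∑_{β=2}^m (∏_{α=1}^{β-1} A_α^{t^α-t₀^α}) · S(t^β-t₀^β; A_β) *ᵥ b_β`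
(indices `0`-based below, products taken in increasing order of `α`):
a function `x` is such a solution iff it agrees with this formula on
`{t : t₀ ≤ t}`. -/
theorem affine_constant_recurrence_solution
    {m n : ℕ} (hm : 2 ≤ m) {K : Type*} [Field K]
    (A : Fin m → Matrix (Fin n) (Fin n) K)
    (b : Fin m → (Fin n → K))
    (hcomm : ∀ α β : Fin m, A α * A β = A β * A α)
    (hcompat : ∀ α β : Fin m,
      ((1 : Matrix (Fin n) (Fin n) K) - A α).mulVec (b β)
        = ((1 : Matrix (Fin n) (Fin n) K) - A β).mulVec (b α))
    (t₀ : Fin m → ℤ) (x₀ : Fin n → K) :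
    ∀ x : (Fin m → ℤ) → (Fin n → K),
      (x t₀ = x₀ ∧
        ∀ t : Fin m → ℤ, t₀ ≤ t → ∀ α : Fin m,
          x (t + Pi.single α 1) = (A α).mulVec (x t) + b α) ↔
      (∀ t : Fin m → ℤ, t₀ ≤ t →
        x t =
          ((((List.finRange m).map
              (fun α : Fin m => A α ^ (t α - t₀ α).toNat)).prod).mulVec x₀)
          + (Sgeom (t ⟨0, by omega⟩ - t₀ ⟨0, by omega⟩).toNat
              (A ⟨0, by omega⟩)).mulVec (b ⟨0, by omega⟩)
          + ∑ β ∈ Finset.univ.filter (fun β : Fin m => β ≠ ⟨0, by omega⟩),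
              (((((List.finRange m).filter (fun α : Fin m => α < β)).map
                  (fun α : Fin m => A α ^ (t α - t₀ α).toNat)).prod)
                * Sgeom (t β - t₀ β).toNat (A β)).mulVec (b β)) := by
  intro x
  set T := fun α => affineStep (A α) (b α)
  have hT : ∀ α β, Commute (T α) (T β) := fun α β => affineStep_commute (hcomm α β) (hcompat α β)
  refine (orthant_recurrence_iff (fun α => (T α • ·)) t₀ x₀
    (F := fun t => finPowProd T (fun α => (t α - t₀ α).toNat) • x₀) ?_ ?_ x).trans
    (forall₂_congr fun t _ => by rw [finPowProd_affineStep_smul_eq (by omega)]; rfl)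
  · simp only [sub_self, Int.toNat_zero]
    rw [← Pi.zero_def, finPowProd_zero, one_smul]
  · intro t ht α
    simp only [Int.toNat_sub_add_single ht, finPowProd_add_single hT, mul_smul]
end

section
/- Let K be a field, n ≥ 1, m ≥ 1, and A_α ∈ M_n(K), b_α ∈ K^n for α ∈ {1,…,m} with A_α A_β = A_β A_α and (I_n − A_α)b_β = (I_n − A_β)b_α for all α, β ∈ {1,…,m}. Suppose there is an index α₀ ∈ {1,…,m} such that I_n − A_{α₀} is invertible, and set v = (I_n − A_{α₀})^{−1} b_{α₀}. Then (I_n − A_α)v = b_α for every α ∈ {1,…,m}. -/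
/-- (Theorem 12 a) of the paper).
Let `A α` be pairwise commuting matrices and `b α` vectors with
`(1 - A α) *ᵥ b β = (1 - A β) *ᵥ b α` for all `α, β`. If `1 - A α₀` is
invertible for some index `α₀` and `v = (1 - A α₀)⁻¹ *ᵥ b α₀`, then
`(1 - A α) *ᵥ v = b α` for every `α`. -/
theorem affine_recurrence_fixed_vector
    {m n : ℕ} (hm : 1 ≤ m) (hn : 1 ≤ n) {K : Type*} [Field K]
    (A : Fin m → Matrix (Fin n) (Fin n) K)
    (b : Fin m → (Fin n → K))
    (hcomm : ∀ α β : Fin m, A α * A β = A β * A α)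
    (hcompat : ∀ α β : Fin m,
      ((1 : Matrix (Fin n) (Fin n) K) - A α).mulVec (b β)
        = ((1 : Matrix (Fin n) (Fin n) K) - A β).mulVec (b α))
    (α₀ : Fin m)
    (hα₀ : IsUnit ((1 : Matrix (Fin n) (Fin n) K) - A α₀))
    (v : Fin n → K)
    (hv : v = ((1 : Matrix (Fin n) (Fin n) K) - A α₀)⁻¹.mulVec (b α₀)) :
    ∀ α : Fin m, ((1 : Matrix (Fin n) (Fin n) K) - A α).mulVec v = b α := by
  intro α
  set M := (1 : Matrix (Fin n) (Fin n) K) - A α₀ with hM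
  set N := (1 : Matrix (Fin n) (Fin n) K) - A α with hN
  have hdet : IsUnit M.det := (Matrix.isUnit_iff_isUnit_det M).mp hα₀
  have hc : Commute N M := by
    simp only [hM, hN, Commute, SemiconjBy, sub_mul, mul_sub, one_mul, mul_one, hcomm α α₀]
    abel
  have hcu : Commute N (hα₀.unit : Matrix (Fin n) (Fin n) K) := by
    rwa [hα₀.unit_spec]
  have hcinv : N * M⁻¹ = M⁻¹ * N := by
    have := hcu.units_inv_right.eq
    rwa [Matrix.coe_units_inv, hα₀.unit_spec] at this
  rw [hv, Matrix.mulVec_mulVec, hcinv, ← Matrix.mulVec_mulVec]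
  have : N.mulVec (b α₀) = M.mulVec (b α) := hcompat α α₀
  rw [this, Matrix.mulVec_mulVec, Matrix.nonsing_inv_mul _ hdet, Matrix.one_mulVec]
end

section
/- Let K be a field, n ≥ 1, m ≥ 1, and A_α ∈ M_n(K), b_α ∈ K^n for α ∈ {1,…,m} with A_α A_β = A_β A_α and (I_n − A_α)b_β = (I_n − A_β)b_α for all α, β ∈ {1,…,m}. Suppose there exists v ∈ K^n with (I_n − A_α)v = b_α for every α ∈ {1,…,m}. Let (t₀,x₀) ∈ ℤ^m × K^n. Then the unique solution x : {t ∈ ℤ^m : t ≥ t₀} → K^n of x(t+1_α) = A_α x(t) + b_α (for all t ≥ t₀ and all α) with x(t₀) = x₀ is x(t) = (Π_{α=1}^{m} A_α^{t^α − t₀^α})·(x₀ − v) + v for all t ≥ t₀. -/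
private lemma update_prod_aux {ι M : Type*} [DecidableEq ι] [Monoid M] (f : ι → M) (c : M)
    (hc : ∀ β, Commute c (f β)) (α : ι) :
    ∀ l : List ι, l.Nodup → α ∈ l →
      (l.map (Function.update f α (c * f α))).prod = c * (l.map f).prod := by
  intro l
  induction l with
  | nil => simp
  | cons a l ih =>
    intro hnd hmem
    rcases List.nodup_cons.mp hnd with ⟨ha, hnd'⟩
    by_cases hax : a = α
    · subst hax
      have hml : l.map (Function.update f a (c * f a)) = l.map f := by
        apply List.map_congr_left
        intro β hβ
        exact Function.update_of_ne (by rintro rfl; exact ha hβ) _ _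
      simp [hml, Function.update_self, mul_assoc]
    · rcases List.mem_cons.mp hmem with h | hmem'
      · exact absurd h.symm hax
      rw [List.map_cons, List.prod_cons, Function.update_of_ne hax,
          List.map_cons, List.prod_cons, ih hnd' hmem', ← mul_assoc,
          ← (hc a).eq, mul_assoc]

private lemma key_prod {m n : ℕ} {K : Type*} [Field K]
    (A : Fin m → Matrix (Fin n) (Fin n) K)
    (hcomm : ∀ α β : Fin m, A α * A β = A β * A α)
    (t₀ t : Fin m → ℤ) (ht : t₀ ≤ t) (α : Fin m) :
    ((List.finRange m).map
        (fun β : Fin m => A β ^ ((t + (Pi.single α 1 : Fin m → ℤ)) β - t₀ β).toNat)).prod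
      = A α * ((List.finRange m).map
        (fun β : Fin m => A β ^ (t β - t₀ β).toNat)).prod := by
  have hfun : (fun β : Fin m => A β ^ ((t + (Pi.single α 1 : Fin m → ℤ)) β - t₀ β).toNat)
      = Function.update (fun β : Fin m => A β ^ (t β - t₀ β).toNat) α
          (A α * A α ^ (t α - t₀ α).toNat) := by
    funext β
    by_cases h : β = α
    · subst h
      have h2 : t₀ β ≤ t β := ht β
      have h1 : ((t β + 1) - t₀ β).toNat = (t β - t₀ β).toNat + 1 := by omega
      simp only [Pi.add_apply, Pi.single_eq_same, Function.update_self, h1, pow_succ']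
    · simp only [Pi.add_apply, Pi.single_eq_of_ne h, add_zero,
        Function.update_of_ne h]
  rw [hfun]
  exact update_prod_aux _ (A α)
    (fun β => (show Commute (A α) (A β) from hcomm α β).pow_right _) α _
    (List.nodup_finRange m) (List.mem_finRange α)

/-- (Theorem 12 b) of the paper).
Let `A α` be pairwise commuting matrices and `b α` vectors with
`(1 - A α) *ᵥ b β = (1 - A β) *ᵥ b α` for all `α, β`. Suppose `v` satisfies
`(1 - A α) *ᵥ v = b α` for every `α`. Then the unique solution of the affine
recurrence `x (t + 1_α) = A α *ᵥ x t + b α` on `{t : t₀ ≤ t}` with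
`x t₀ = x₀` is `x t = (∏_{α=1}^m A_α^{t^α - t₀^α}) *ᵥ (x₀ - v) + v`
(the product taken in increasing order of `α`): a function `x` is such a
solution iff it agrees with this formula on `{t : t₀ ≤ t}`. -/
theorem affine_constant_recurrence_solution_with_fixed_vector
    {m n : ℕ} (hm : 1 ≤ m) (hn : 1 ≤ n) {K : Type*} [Field K]
    (A : Fin m → Matrix (Fin n) (Fin n) K)
    (b : Fin m → (Fin n → K))
    (hcomm : ∀ α β : Fin m, A α * A β = A β * A α)
    (hcompat : ∀ α β : Fin m,
      ((1 : Matrix (Fin n) (Fin n) K) - A α).mulVec (b β)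
        = ((1 : Matrix (Fin n) (Fin n) K) - A β).mulVec (b α))
    (v : Fin n → K)
    (hv : ∀ α : Fin m, ((1 : Matrix (Fin n) (Fin n) K) - A α).mulVec v = b α)
    (t₀ : Fin m → ℤ) (x₀ : Fin n → K) :
    ∀ x : (Fin m → ℤ) → (Fin n → K),
      (x t₀ = x₀ ∧
        ∀ t : Fin m → ℤ, t₀ ≤ t → ∀ α : Fin m,
          x (t + Pi.single α 1) = (A α).mulVec (x t) + b α) ↔
      (∀ t : Fin m → ℤ, t₀ ≤ t →
        x t = ((((List.finRange m).map
            (fun α : Fin m => A α ^ (t α - t₀ α).toNat)).prod).mulVec (x₀ - v))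
          + v) := by
  intro x
  set P : (Fin m → ℤ) → Matrix (Fin n) (Fin n) K :=
    fun t => ((List.finRange m).map (fun β : Fin m => A β ^ (t β - t₀ β).toNat)).prod with hP
  have hP0 : P t₀ = 1 := by
    apply List.prod_eq_one
    intro y hy
    simp only [List.mem_map] at hy
    rcases hy with ⟨β, _, rfl⟩
    simp
  have hvfix : ∀ α : Fin m, (A α).mulVec v + b α = v := by
    intro α
    rw [← hv α, Matrix.sub_mulVec, Matrix.one_mulVec]
    abel
  have hstep : ∀ t : Fin m → ℤ, t₀ ≤ t → ∀ α : Fin m,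
      (A α).mulVec ((P t).mulVec (x₀ - v) + v) + b α
        = (P (t + Pi.single α 1)).mulVec (x₀ - v) + v := by
    intro t ht α
    have hk := key_prod A hcomm t₀ t ht α
    show (A α).mulVec ((P t).mulVec (x₀ - v) + v) + b α
      = (P (t + Pi.single α 1)).mulVec (x₀ - v) + v
    rw [show P (t + Pi.single α 1) = A α * P t from hk,
      ← Matrix.mulVec_mulVec, Matrix.mulVec_add, add_assoc, hvfix α]
  constructor
  · rintro ⟨hx0, hrec⟩
    have main : ∀ N : ℕ, ∀ t : Fin m → ℤ, t₀ ≤ t →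
        (∑ β, (t β - t₀ β).toNat) = N → x t = (P t).mulVec (x₀ - v) + v := by
      intro N
      induction N using Nat.strong_induction_on with
      | _ N ih =>
        intro t ht hN
        by_cases h : t = t₀
        · subst h
          rw [hx0, hP0, Matrix.one_mulVec]
          abel
        · have : ∃ α : Fin m, t₀ α < t α := by
            by_contra hc
            push_neg at hc
            exact h (le_antisymm (fun β => hc β) ht)
          rcases this with ⟨α, hα⟩
          set s : Fin m → ℤ := t - Pi.single α 1 with hs
          clear_value s
          have hsβ : ∀ β, s β = t β - (Pi.single α 1 : Fin m → ℤ) β := by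
            intro β; rw [hs]; rfl
          have hts : t = s + Pi.single α 1 := by
            funext β
            have := hsβ β
            simp only [Pi.add_apply]
            omega
          have hs0 : t₀ ≤ s := by
            intro β
            show t₀ β ≤ s β
            have h1 := hsβ β
            by_cases hβ : β = α
            · subst hβ
              rw [Pi.single_eq_same] at h1
              omega
            · rw [Pi.single_eq_of_ne hβ] at h1
              have h3 : t₀ β ≤ t β := ht β
              omega
          have hNs : (∑ β, (s β - t₀ β).toNat) < N := by
            rw [← hN]
            apply Finset.sum_lt_sum
            · intro β _
              have h1 := hsβ β
              have h2 : t₀ β ≤ t β := ht β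
              by_cases hβ : β = α
              · subst hβ; rw [Pi.single_eq_same] at h1; omega
              · rw [Pi.single_eq_of_ne hβ] at h1; omega
            · refine ⟨α, Finset.mem_univ α, ?_⟩
              have h1 := hsβ α
              rw [Pi.single_eq_same] at h1
              omega
          have hxs := ih _ hNs s hs0 rfl
          rw [hts, hrec s hs0 α, hxs, hstep s hs0 α]
    intro t ht
    exact main _ t ht rfl
  · intro hform
    have hform' : ∀ t : Fin m → ℤ, t₀ ≤ t →
        x t = (P t).mulVec (x₀ - v) + v := hform
    constructor
    · rw [hform' t₀ le_rfl, hP0, Matrix.one_mulVec]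
      abel
    · intro t ht α
      have ht' : t₀ ≤ t + Pi.single α 1 := by
        intro β
        show t₀ β ≤ (t + (Pi.single α 1 : Fin m → ℤ)) β
        by_cases hβ : β = α
        · subst hβ
          simp only [Pi.add_apply, Pi.single_eq_same]
          have h3 : t₀ β ≤ t β := ht β; omega
        · simp only [Pi.add_apply, Pi.single_eq_of_ne hβ, add_zero]
          exact ht β
      rw [hform' _ ht', hform' t ht, hstep t ht α]
end
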